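/- arXiv:2605.24801 — 8 statements merged into one kernel-verified Lean document; each statement's English description precedes it below -/
import Mathlib

section
/- For every admissible integer n with n ≥ 4, the transitive tournament TT_n does not admit a decomposition of its arc set into blocks all of which are forks. -/
/-- The arc set of the transitive tournament `TT n` on vertices `Fin n`
(vertex `v_{i+1}` of the paper is index `i`): there is an arc `(i, j)` iff `i < j`. -/
def ttArcs (n : ℕ) : Finset (Fin n × Fin n) :=
  Finset.univ.filter fun p => p.1 < p.2

/-- A chain: a two-arc block `{(i,j), (j,k)}` with `i < j < k`. -/
def IsChainMotif {n : ℕ} (b : Finset (Fin n × Fin n)) : Prop :=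
  ∃ i j k : Fin n, i < j ∧ j < k ∧ b = {(i, j), (j, k)}

/-- A collider: a two-arc block `{(i,j), (k,j)}` with `i, k < j` and `i ≠ k`. -/
def IsColliderMotif {n : ℕ} (b : Finset (Fin n × Fin n)) : Prop :=
  ∃ i k j : Fin n, i < j ∧ k < j ∧ i ≠ k ∧ b = {(i, j), (k, j)}

/-- A fork: a two-arc block `{(i,j), (i,k)}` with `i < j`, `i < k` and `j ≠ k`. -/
def IsForkMotif {n : ℕ} (b : Finset (Fin n × Fin n)) : Prop :=
  ∃ i j k : Fin n, i < j ∧ i < k ∧ j ≠ k ∧ b = {(i, j), (i, k)}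

instance {n : ℕ} : DecidablePred (IsChainMotif (n := n)) := fun b => by
  unfold IsChainMotif; infer_instance

instance {n : ℕ} : DecidablePred (IsColliderMotif (n := n)) := fun b => by
  unfold IsColliderMotif; infer_instance

instance {n : ℕ} : DecidablePred (IsForkMotif (n := n)) := fun b => by
  unfold IsForkMotif; infer_instance

/-- `P` is a decomposition of the arc set of `TT n`: its blocks are pairwise
disjoint and their union is the whole arc set. -/
def IsTTDecomposition {n : ℕ} (P : Finset (Finset (Fin n × Fin n))) : Prop :=
  (P : Set (Finset (Fin n × Fin n))).PairwiseDisjoint id ∧ P.sup id = ttArcs n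

/-- `n` is admissible iff `n ≡ 0` or `1 (mod 4)`. -/
def Admissible (n : ℕ) : Prop := n % 4 = 0 ∨ n % 4 = 1

theorem tt_no_fork_decomposition (n : ℕ) (hn : 4 ≤ n) (hadm : Admissible n) :
    ¬ ∃ P : Finset (Finset (Fin n × Fin n)),
        IsTTDecomposition P ∧ ∀ b ∈ P, IsForkMotif b := by
  rintro ⟨P, ⟨hdisj, hsup⟩, hfork⟩
  have h1 : n - 2 < n := by omega
  have h2 : n - 1 < n := by omega
  set a : Fin n × Fin n := (⟨n - 2, h1⟩, ⟨n - 1, h2⟩) with ha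
  have haarc : a ∈ ttArcs n := by
    rw [ttArcs, Finset.mem_filter]
    refine ⟨Finset.mem_univ _, ?_⟩
    rw [Fin.lt_def]
    show n - 2 < n - 1
    omega
  rw [← hsup, Finset.mem_sup] at haarc
  obtain ⟨b, hbP, hab⟩ := haarc
  obtain ⟨i, j, k, hij, hik, hjk, hb⟩ := hfork b hbP
  rw [hb] at hab
  rcases Finset.mem_insert.mp hab with h | h
  · have hi : n - 2 = (i : ℕ) := congrArg (fun p => ((p : Fin n × Fin n).1 : ℕ)) h
    have hj : n - 1 = (j : ℕ) := congrArg (fun p => ((p : Fin n × Fin n).2 : ℕ)) h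
    rw [Fin.lt_def] at hik
    have := k.isLt
    exact hjk (Fin.ext (by omega))
  · replace h := Finset.mem_singleton.mp h
    have hi : n - 2 = (i : ℕ) := congrArg (fun p => ((p : Fin n × Fin n).1 : ℕ)) h
    have hk : n - 1 = (k : ℕ) := congrArg (fun p => ((p : Fin n × Fin n).2 : ℕ)) h
    rw [Fin.lt_def] at hij
    have := j.isLt
    exact hjk (Fin.ext (by omega))
end

section
/- For every admissible integer n with n ≥ 4, the transitive tournament TT_n does not admit a decomposition of its arc set into blocks all of which are chains. -/
theorem tt_no_chain_decomposition (n : ℕ) (hn : 4 ≤ n) (hadm : Admissible n) :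
    ¬ ∃ P : Finset (Finset (Fin n × Fin n)),
        IsTTDecomposition P ∧ ∀ b ∈ P, IsChainMotif b := by
  rintro ⟨P, ⟨hdisj, hsup⟩, hchain⟩
  have ha : ((⟨0, by omega⟩ : Fin n), (⟨n - 1, by omega⟩ : Fin n)) ∈ ttArcs n := by
    refine Finset.mem_filter.mpr ⟨Finset.mem_univ _, ?_⟩
    dsimp only
    rw [Fin.mk_lt_mk]
    omega
  rw [← hsup, Finset.mem_sup] at ha
  obtain ⟨b, hbP, hab⟩ := ha
  obtain ⟨i, j, k, hij, hjk, rfl⟩ := hchain b hbP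
  simp only [id] at hab
  rw [Finset.mem_insert, Finset.mem_singleton, Prod.ext_iff, Prod.ext_iff] at hab
  rw [Fin.lt_def] at hij hjk
  have hk := k.isLt
  have hi := i.isLt
  rcases hab with ⟨h1, h2⟩ | ⟨h1, h2⟩ <;>
    simp [Fin.ext_iff] at h1 h2 <;> omega
end

section
/- For every admissible integer n with n ≥ 4, the transitive tournament TT_n does not admit a decomposition of its arc set into blocks all of which are colliders. -/
theorem tt_no_collider_decomposition (n : ℕ) (hn : 4 ≤ n) (hadm : Admissible n) :
    ¬ ∃ P : Finset (Finset (Fin n × Fin n)),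
        IsTTDecomposition P ∧ ∀ b ∈ P, IsColliderMotif b := by
  rintro ⟨P, ⟨-, hsup⟩, hcol⟩
  have h1 : (1 : ℕ) < n := by omega
  have h0 : (0 : ℕ) < n := by omega
  have hmem : ((⟨0, h0⟩, ⟨1, h1⟩) : Fin n × Fin n) ∈ ttArcs n := by
    exact Finset.mem_filter.mpr ⟨Finset.mem_univ _, Fin.mk_lt_mk.mpr one_pos⟩
  rw [← hsup, Finset.mem_sup] at hmem
  obtain ⟨b, hbP, hab⟩ := hmem
  obtain ⟨i, k, j, hij, hkj, hik, rfl⟩ := hcol b hbP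
  rw [id_eq, Finset.mem_insert, Finset.mem_singleton, Prod.mk.injEq, Prod.mk.injEq] at hab
  apply hik
  rcases hab with ⟨hi, hj⟩ | ⟨hk, hj⟩
  · have hk1 : (k : ℕ) < 1 := by
      have := hkj; rw [Fin.lt_def, ← hj] at this; exact this
    rw [← hi]; exact Fin.ext (show (0:ℕ) = (k:ℕ) by omega)
  · have hi1 : (i : ℕ) < 1 := by
      have := hij; rw [Fin.lt_def, ← hj] at this; exact this
    rw [← hk]; exact Fin.ext (show (i:ℕ) = (0:ℕ) by omega)
end

section
/- For every admissible integer n, the transitive tournament TT_n admits a chain–collider–fork decomposition, that is, a partition of its arc set into two-element blocks each of which is a chain, a collider, or a fork. -/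
section InvolutionBlocks

variable {α : Type*} [DecidableEq α] {p : α → α}

theorem pair_eq_pair_of_mem {a c : α} (hinv : p (p a) = a) (hc : c ∈ ({a, p a} : Finset α)) :
    ({a, p a} : Finset α) = {c, p c} := by
  rcases Finset.mem_insert.mp hc with rfl | hc
  · rfl
  · rw [Finset.mem_singleton.mp hc, hinv, Finset.pair_comm]

theorem pairwiseDisjoint_image_pair {s : Finset α} (hinv : ∀ a ∈ s, p (p a) = a) :
    ((s.image fun a => ({a, p a} : Finset α)) : Set (Finset α)).PairwiseDisjoint id := by
  simp only [Finset.coe_image]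
  rintro _ ⟨a, ha, rfl⟩ _ ⟨b, hb, rfl⟩ hne
  dsimp only at hne ⊢
  refine Finset.disjoint_left.mpr fun c hca hcb => hne ?_
  rw [pair_eq_pair_of_mem (hinv a ha) hca, pair_eq_pair_of_mem (hinv b hb) hcb]

theorem sup_image_pair {s : Finset α} (hmaps : ∀ a ∈ s, p a ∈ s) :
    (s.image fun a => ({a, p a} : Finset α)).sup id = s := by
  apply le_antisymm
  · simp only [Finset.sup_le_iff, Finset.mem_image, forall_exists_index, and_imp,
      forall_apply_eq_imp_iff₂, id]
    intro a ha
    exact Finset.insert_subset ha (Finset.singleton_subset_iff.mpr (hmaps a ha))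
  · intro a ha
    exact Finset.mem_sup.mpr ⟨{a, p a}, Finset.mem_image_of_mem _ ha, Finset.mem_insert_self _ _⟩

end InvolutionBlocks

def ttPartner (n i j : ℕ) : ℕ × ℕ :=
  if j = n - 1 ∧ i % 2 = n % 2 then
    (if i % 4 = n % 4 then i + 2 else i - 2, n - 1)
  else
    (i, if (j - i) % 2 = 1 then j + 1 else j - 1)

section TTPartner

variable {n i j : ℕ}

theorem ttPartner_isArc (hij : i < j) (hj : j < n) :
    (ttPartner n i j).1 < (ttPartner n i j).2 ∧ (ttPartner n i j).2 < n := by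
  unfold ttPartner
  split_ifs <;> omega

theorem ttPartner_ttPartner (hadm : Admissible n) (hij : i < j) (hj : j < n) :
    ttPartner n (ttPartner n i j).1 (ttPartner n i j).2 = (i, j) := by
  unfold Admissible at hadm
  unfold ttPartner
  split_ifs <;> simp only [Prod.mk.injEq, true_and] at * <;> omega

theorem ttPartner_shares_endpoint (hadm : Admissible n) (hij : i < j) (hj : j < n) :
    ((ttPartner n i j).1 = i ∧ (ttPartner n i j).2 ≠ j) ∨
      ((ttPartner n i j).2 = j ∧ (ttPartner n i j).1 ≠ i) := by
  unfold Admissible at hadm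
  unfold ttPartner
  split_ifs <;> omega

end TTPartner

def arcPartner {n : ℕ} (a : Fin n × Fin n) : Fin n × Fin n :=
  if h : a.1 < a.2 then
    (⟨_, (ttPartner_isArc h a.2.2).1.trans (ttPartner_isArc h a.2.2).2⟩,
      ⟨_, (ttPartner_isArc h a.2.2).2⟩)
  else a

section ArcPartner

variable {n : ℕ} {a : Fin n × Fin n}

theorem mem_ttArcs : a ∈ ttArcs n ↔ a.1 < a.2 := by
  simp [ttArcs]

theorem arcPartner_fst_val (ha : a.1 < a.2) : (arcPartner a).1.val = (ttPartner n a.1 a.2).1 := by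
  simp [arcPartner, ha]

theorem arcPartner_snd_val (ha : a.1 < a.2) : (arcPartner a).2.val = (ttPartner n a.1 a.2).2 := by
  simp [arcPartner, ha]

theorem arcPartner_mem_ttArcs (ha : a ∈ ttArcs n) : arcPartner a ∈ ttArcs n := by
  rw [mem_ttArcs, Fin.lt_def] at *
  rw [arcPartner_fst_val ha, arcPartner_snd_val ha]
  exact (ttPartner_isArc ha a.2.2).1

theorem arcPartner_arcPartner (hadm : Admissible n) (ha : a ∈ ttArcs n) :
    arcPartner (arcPartner a) = a := by
  have hpa := mem_ttArcs.mp (arcPartner_mem_ttArcs ha)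
  rw [mem_ttArcs] at ha
  have hinv := ttPartner_ttPartner hadm ha a.2.2
  refine Prod.ext (Fin.ext ?_) (Fin.ext ?_)
  · rw [arcPartner_fst_val hpa, arcPartner_fst_val ha, arcPartner_snd_val ha, hinv]
  · rw [arcPartner_snd_val hpa, arcPartner_fst_val ha, arcPartner_snd_val ha, hinv]

theorem arcPartner_shares_endpoint (hadm : Admissible n) (ha : a ∈ ttArcs n) :
    ((arcPartner a).1 = a.1 ∧ (arcPartner a).2 ≠ a.2) ∨
      ((arcPartner a).2 = a.2 ∧ (arcPartner a).1 ≠ a.1) := by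
  rw [mem_ttArcs] at ha
  simp only [← Fin.val_inj, ne_eq, arcPartner_fst_val ha, arcPartner_snd_val ha]
  exact ttPartner_shares_endpoint hadm ha a.2.2

end ArcPartner

section Motifs

variable {n : ℕ} {a b : Fin n × Fin n}

theorem isForkMotif_pair (ha : a.1 < a.2) (hb : b.1 < b.2) (htail : a.1 = b.1)
    (hhead : a.2 ≠ b.2) : IsForkMotif {a, b} := by
  obtain ⟨i, j⟩ := a
  obtain ⟨k, l⟩ := b
  dsimp only at *
  subst htail
  exact ⟨i, j, l, ha, hb, hhead, rfl⟩

theorem isColliderMotif_pair (ha : a.1 < a.2) (hb : b.1 < b.2) (hhead : a.2 = b.2)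
    (htail : a.1 ≠ b.1) : IsColliderMotif {a, b} := by
  obtain ⟨i, j⟩ := a
  obtain ⟨k, l⟩ := b
  dsimp only at *
  subst hhead
  exact ⟨i, k, j, ha, hb, htail, rfl⟩

theorem isColliderMotif_or_isForkMotif_arcPartner (hadm : Admissible n) (ha : a ∈ ttArcs n) :
    IsColliderMotif {a, arcPartner a} ∨ IsForkMotif {a, arcPartner a} := by
  have hpa := mem_ttArcs.mp (arcPartner_mem_ttArcs ha)
  rcases arcPartner_shares_endpoint hadm ha with ⟨htail, hhead⟩ | ⟨hhead, htail⟩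
  · exact Or.inr (isForkMotif_pair (mem_ttArcs.mp ha) hpa htail.symm (Ne.symm hhead))
  · exact Or.inl (isColliderMotif_pair (mem_ttArcs.mp ha) hpa hhead.symm (Ne.symm htail))

end Motifs

theorem tt_ccf_decomposition_exists (n : ℕ) (hadm : Admissible n) :
    ∃ P : Finset (Finset (Fin n × Fin n)),
      IsTTDecomposition P ∧ (∀ b ∈ P, IsChainMotif b ∨ IsColliderMotif b ∨ IsForkMotif b) := by
  refine ⟨(ttArcs n).image fun a => {a, arcPartner a},
    ⟨pairwiseDisjoint_image_pair fun a ha => arcPartner_arcPartner hadm ha,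
      sup_image_pair fun a ha => arcPartner_mem_ttArcs ha⟩, ?_⟩
  simp only [Finset.mem_image, forall_exists_index, and_imp, forall_apply_eq_imp_iff₂]
  exact fun a ha => Or.inr (isColliderMotif_or_isForkMotif_arcPartner hadm ha)
end

section
/- For every admissible integer n, the transitive tournament TT_n admits a chain–collider–fork decomposition containing exactly ⌊(n−1)/2⌋ chains, exactly ⌊n/4⌋ colliders, and exactly n(n−1)/4 − ⌊(n−1)/2⌋ − ⌊n/4⌋ forks. -/
/-
If `TT_m` and `TT_{2h}` have decompositions, place `TT_{2h}` on top of `TT_m`: the `2h` arcs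
from a lower vertex `i` to the upper vertices `m + t`, `m + h + t` (`t < h`) pair up into `h`
forks, so `TT_{m+2h}` has a decomposition whose chains and colliders are those of the two parts.
Starting from `TT_1` (no arcs), or from the decomposition `{01, 12}, {13, 23}, {02, 03}` of `TT_4`
(one block of each kind), and gluing on the decomposition `{01, 12}, {02, 23}, {03, 13}` of `TT_4`
(two chains, one collider) over and over gives the required numbers of chains and colliders.
Every block has two arcs, so there are `n(n-1)/4` blocks, and the remaining ones are forks.
-/

open Finset

theorem Finset.pair_eq_pair_iff {α : Type*} [DecidableEq α] {x y z w : α} :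
    ({x, y} : Finset α) = {z, w} ↔ x = z ∧ y = w ∨ x = w ∧ y = z := by
  rw [← coe_inj, coe_pair, coe_pair, Set.pair_eq_pair_iff]

section Motif

variable {n : ℕ} {b : Finset (Fin n × Fin n)}

def IsMotif (b : Finset (Fin n × Fin n)) : Prop :=
  IsChainMotif b ∨ IsColliderMotif b ∨ IsForkMotif b

theorem IsChainMotif.not_isColliderMotif (hb : IsChainMotif b) : ¬ IsColliderMotif b := by
  obtain ⟨i, j, k, hij, hjk, rfl⟩ := hb
  rintro ⟨a, c, d, -, -, hac, h⟩
  simp only [Finset.pair_eq_pair_iff, Prod.ext_iff] at h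
  grind

theorem IsChainMotif.not_isForkMotif (hb : IsChainMotif b) : ¬ IsForkMotif b := by
  obtain ⟨i, j, k, hij, hjk, rfl⟩ := hb
  rintro ⟨a, c, d, -, -, hac, h⟩
  simp only [Finset.pair_eq_pair_iff, Prod.ext_iff] at h
  grind

theorem IsColliderMotif.not_isForkMotif (hb : IsColliderMotif b) : ¬ IsForkMotif b := by
  obtain ⟨i, k, j, -, -, hik, rfl⟩ := hb
  rintro ⟨a, c, d, -, -, hac, h⟩
  simp only [Finset.pair_eq_pair_iff, Prod.ext_iff] at h
  grind

theorem IsColliderMotif.not_isChainMotif (hb : IsColliderMotif b) : ¬ IsChainMotif b :=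
  fun h => h.not_isColliderMotif hb

theorem IsForkMotif.not_isChainMotif (hb : IsForkMotif b) : ¬ IsChainMotif b :=
  fun h => h.not_isForkMotif hb

theorem IsForkMotif.not_isColliderMotif (hb : IsForkMotif b) : ¬ IsColliderMotif b :=
  fun h => h.not_isForkMotif hb

theorem IsMotif.card_eq_two (hb : IsMotif b) : b.card = 2 := by
  rcases hb with ⟨i, j, k, hij, -, rfl⟩ | ⟨i, k, j, -, -, hik, rfl⟩ |
    ⟨i, j, k, -, -, hjk, rfl⟩
  · exact card_pair (by simp [hij.ne])
  · exact card_pair (by simp [hik])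
  · exact card_pair (by simp [hjk])

theorem IsMotif.nonempty (hb : IsMotif b) : b.Nonempty :=
  card_pos.1 (by rw [hb.card_eq_two]; norm_num)

end Motif

section BlockPartition

variable {α β : Type*} [DecidableEq α] [DecidableEq β]
variable {P Q : Finset (Finset α)} {A B : Finset α}

def IsBlockPartition (P : Finset (Finset α)) (A : Finset α) : Prop :=
  (P : Set (Finset α)).PairwiseDisjoint id ∧ P.sup id = A

theorem pairwiseDisjoint_triple {x y z : Finset α} (hxy : Disjoint x y) (hxz : Disjoint x z)
    (hyz : Disjoint y z) :
    (({x, y, z} : Finset (Finset α)) : Set (Finset α)).PairwiseDisjoint id := by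
  rw [coe_insert, coe_pair]
  refine Set.PairwiseDisjoint.insert (Set.pairwise_pair_of_symm.2 fun _ => hyz) fun c hc _ => ?_
  rcases hc with rfl | rfl
  exacts [hxy, hxz]

theorem IsBlockPartition.subset (hP : IsBlockPartition P A) {b : Finset α} (hb : b ∈ P) :
    b ⊆ A :=
  hP.2 ▸ le_sup (f := id) hb

theorem IsBlockPartition.union (hP : IsBlockPartition P A) (hQ : IsBlockPartition Q B)
    (hAB : Disjoint A B) : IsBlockPartition (P ∪ Q) (A ∪ B) := by
  refine ⟨?_, by rw [sup_union, hP.2, hQ.2]; rfl⟩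
  rw [coe_union]
  exact hP.1.union hQ.1 fun b hb c hc _ => hAB.mono (hP.subset hb) (hQ.subset hc)

theorem IsBlockPartition.disjoint (hP : IsBlockPartition P A) (hQ : IsBlockPartition Q B)
    (hAB : Disjoint A B) (hne : ∀ b ∈ P, b.Nonempty) : Disjoint P Q := by
  rw [Finset.disjoint_left]
  intro b hbP hbQ
  obtain ⟨x, hx⟩ := hne b hbP
  exact disjoint_left.1 hAB (hP.subset hbP hx) (hQ.subset hbQ hx)

theorem IsBlockPartition.card_filter_union (hP : IsBlockPartition P A)
    (hQ : IsBlockPartition Q B) (hAB : Disjoint A B) (hne : ∀ b ∈ P, b.Nonempty)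
    (p : Finset α → Prop) [DecidablePred p] :
    ((P ∪ Q).filter p).card = (P.filter p).card + (Q.filter p).card := by
  rw [filter_union, card_union_of_disjoint (disjoint_filter_filter (hP.disjoint hQ hAB hne))]

theorem IsBlockPartition.map (e : α ↪ β) (hP : IsBlockPartition P A) :
    IsBlockPartition (P.map (mapEmbedding e).toEmbedding) (A.map e) := by
  refine ⟨?_, ?_⟩
  · rw [coe_map]
    rintro _ ⟨b, hb, rfl⟩ _ ⟨c, hc, rfl⟩ hbc
    exact (disjoint_map e).2 (hP.1 hb hc fun h => hbc (h ▸ rfl))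
  · rw [← hP.2]
    ext x
    simp only [mem_sup, sup_map, Function.comp_apply, id_eq, RelEmbedding.coe_toEmbedding,
      mapEmbedding_apply, mem_map]
    grind

theorem IsBlockPartition.two_mul_card (hP : IsBlockPartition P A) (h2 : ∀ b ∈ P, b.card = 2) :
    2 * P.card = A.card := by
  rw [← hP.2, sup_eq_biUnion, card_biUnion hP.1]
  simp only [id_eq]
  rw [sum_congr rfl h2, sum_const, smul_eq_mul, mul_comm]

end BlockPartition

section Relabel

variable {m k : ℕ} (f : Fin m ↪o Fin k) {b : Finset (Fin m × Fin m)}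

def arcMap : Fin m × Fin m ↪ Fin k × Fin k :=
  f.toEmbedding.prodMap f.toEmbedding

@[simp]
theorem arcMap_apply (p : Fin m × Fin m) : arcMap f p = (f p.1, f p.2) := rfl

theorem IsChainMotif.map (hb : IsChainMotif b) : IsChainMotif (b.map (arcMap f)) := by
  obtain ⟨i, j, k, hij, hjk, rfl⟩ := hb
  exact ⟨f i, f j, f k, f.lt_iff_lt.2 hij, f.lt_iff_lt.2 hjk, by simp⟩

theorem IsColliderMotif.map (hb : IsColliderMotif b) : IsColliderMotif (b.map (arcMap f)) := by
  obtain ⟨i, k, j, hij, hkj, hik, rfl⟩ := hb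
  exact ⟨f i, f k, f j, f.lt_iff_lt.2 hij, f.lt_iff_lt.2 hkj, f.injective.ne hik, by simp⟩

theorem IsForkMotif.map (hb : IsForkMotif b) : IsForkMotif (b.map (arcMap f)) := by
  obtain ⟨i, j, k, hij, hik, hjk, rfl⟩ := hb
  exact ⟨f i, f j, f k, f.lt_iff_lt.2 hij, f.lt_iff_lt.2 hik, f.injective.ne hjk, by simp⟩

theorem IsMotif.map (hb : IsMotif b) : IsMotif (b.map (arcMap f)) :=
  hb.imp (IsChainMotif.map f) (Or.imp (IsColliderMotif.map f) (IsForkMotif.map f))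

theorem IsMotif.isChainMotif_map_iff (hb : IsMotif b) :
    IsChainMotif (b.map (arcMap f)) ↔ IsChainMotif b := by
  rcases hb with hb | hb | hb
  · exact iff_of_true (hb.map f) hb
  · exact iff_of_false (hb.map f).not_isChainMotif hb.not_isChainMotif
  · exact iff_of_false (hb.map f).not_isChainMotif hb.not_isChainMotif

theorem IsMotif.isColliderMotif_map_iff (hb : IsMotif b) :
    IsColliderMotif (b.map (arcMap f)) ↔ IsColliderMotif b := by
  rcases hb with hb | hb | hb
  · exact iff_of_false (hb.map f).not_isColliderMotif hb.not_isColliderMotif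
  · exact iff_of_true (hb.map f) hb
  · exact iff_of_false (hb.map f).not_isColliderMotif hb.not_isColliderMotif

def blockMap : Finset (Fin m × Fin m) ↪ Finset (Fin k × Fin k) :=
  (mapEmbedding (arcMap f)).toEmbedding

@[simp]
theorem blockMap_apply (b : Finset (Fin m × Fin m)) : blockMap f b = b.map (arcMap f) := rfl

variable {P : Finset (Finset (Fin m × Fin m))}

theorem forall_isMotif_map (hP : ∀ b ∈ P, IsMotif b) :
    ∀ b ∈ P.map (blockMap f), IsMotif b := by
  simp only [mem_map, blockMap_apply]
  rintro _ ⟨b, hb, rfl⟩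
  exact (hP b hb).map f

theorem card_filter_isChainMotif_map (hP : ∀ b ∈ P, IsMotif b) :
    ((P.map (blockMap f)).filter IsChainMotif).card = (P.filter IsChainMotif).card := by
  rw [filter_map, card_map]
  exact congrArg card (filter_congr fun b hb => (hP b hb).isChainMotif_map_iff f)

theorem card_filter_isColliderMotif_map (hP : ∀ b ∈ P, IsMotif b) :
    ((P.map (blockMap f)).filter IsColliderMotif).card = (P.filter IsColliderMotif).card := by
  rw [filter_map, card_map]
  exact congrArg card (filter_congr fun b hb => (hP b hb).isColliderMotif_map_iff f)

end Relabel

section Splitting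

variable {m k : ℕ}

@[simp]
theorem Fin.castAdd_lt_castAdd_iff {i j : Fin m} : Fin.castAdd k i < Fin.castAdd k j ↔ i < j :=
  (Fin.castAddOrderEmb k).lt_iff_lt

@[simp]
theorem Fin.castAdd_lt_natAdd (i : Fin m) (j : Fin k) : Fin.castAdd k i < Fin.natAdd m j := by
  simp [Fin.lt_def]
  omega

@[simp]
theorem Fin.castAdd_le_natAdd (i : Fin m) (j : Fin k) : Fin.castAdd k i ≤ Fin.natAdd m j :=
  (Fin.castAdd_lt_natAdd i j).le

@[simp]
theorem Fin.castAdd_ne_natAdd (i : Fin m) (j : Fin k) : Fin.castAdd k i ≠ Fin.natAdd m j :=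
  (Fin.castAdd_lt_natAdd i j).ne

@[simp]
theorem Fin.natAdd_ne_castAdd (i : Fin m) (j : Fin k) : Fin.natAdd m j ≠ Fin.castAdd k i :=
  (Fin.castAdd_lt_natAdd i j).ne'

@[simp]
theorem mem_ttArcs_s5 {n : ℕ} {p : Fin n × Fin n} : p ∈ ttArcs n ↔ p.1 < p.2 := by
  simp [ttArcs]

def crossArcs (m k : ℕ) : Finset (Fin (m + k) × Fin (m + k)) :=
  univ.map ((Fin.castAddEmb k).prodMap (Fin.natAddEmb m))

theorem ttArcs_add :
    ttArcs (m + k) = (ttArcs m).map (arcMap (Fin.castAddOrderEmb k)) ∪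
      (ttArcs k).map (arcMap (Fin.natAddOrderEmb m)) ∪ crossArcs m k := by
  ext ⟨u, v⟩
  induction u using Fin.addCases <;> induction v using Fin.addCases <;>
    simp [crossArcs]

theorem disjoint_ttArcs_castAdd_natAdd :
    Disjoint ((ttArcs m).map (arcMap (Fin.castAddOrderEmb k)))
      ((ttArcs k).map (arcMap (Fin.natAddOrderEmb m))) := by
  simp only [disjoint_left, mem_map]
  rintro _ ⟨a, -, rfl⟩ ⟨b, -, hb⟩
  simp [Prod.ext_iff] at hb

theorem disjoint_ttArcs_add_crossArcs :
    Disjoint ((ttArcs m).map (arcMap (Fin.castAddOrderEmb k)) ∪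
      (ttArcs k).map (arcMap (Fin.natAddOrderEmb m))) (crossArcs m k) := by
  simp only [disjoint_left, mem_union, mem_map, crossArcs]
  rintro _ (⟨a, -, rfl⟩ | ⟨a, -, rfl⟩) ⟨b, -, hb⟩ <;> simp [Prod.ext_iff] at hb

end Splitting

section CrossForks

variable {m h : ℕ}

def crossFork (i : Fin m) (t : Fin h) : Finset (Fin (m + (h + h)) × Fin (m + (h + h))) :=
  {(Fin.castAdd (h + h) i, Fin.natAdd m (Fin.castAdd h t)),
    (Fin.castAdd (h + h) i, Fin.natAdd m (Fin.natAdd h t))}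

def crossForks (m h : ℕ) : Finset (Finset (Fin (m + (h + h)) × Fin (m + (h + h)))) :=
  univ.image fun x : Fin m × Fin h => crossFork x.1 x.2

theorem forall_isForkMotif_crossForks : ∀ b ∈ crossForks m h, IsForkMotif b := by
  simp only [crossForks, mem_image]
  rintro _ ⟨⟨i, t⟩, -, rfl⟩
  refine ⟨_, _, _, Fin.castAdd_lt_natAdd _ _, Fin.castAdd_lt_natAdd _ _, ?_, rfl⟩
  have := t.isLt
  simp [Fin.ext_iff]
  omega

theorem isBlockPartition_crossForks : IsBlockPartition (crossForks m h) (crossArcs m (h + h)) := by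
  refine ⟨?_, ?_⟩
  · rw [crossForks, coe_image]
    rintro _ ⟨⟨i, t⟩, -, rfl⟩ _ ⟨⟨i', t'⟩, -, rfl⟩ hne
    rw [Function.onFun, disjoint_left]
    intro p hp hp'
    suffices i = i' ∧ t = t' by obtain ⟨rfl, rfl⟩ := this; exact hne rfl
    simp only [id_eq, crossFork, mem_insert, mem_singleton, Prod.ext_iff, Fin.ext_iff,
      Fin.val_castAdd, Fin.val_natAdd] at hp hp' ⊢
    omega
  · ext ⟨u, v⟩
    induction v using Fin.addCases with
    | left v => simp [crossForks, crossFork, crossArcs, mem_sup]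
    | right v =>
      induction v using Fin.addCases <;> simp [crossForks, crossFork, crossArcs, mem_sup] <;> grind

end CrossForks

def HasMotifDecomposition (n chains colliders : ℕ) : Prop :=
  ∃ P : Finset (Finset (Fin n × Fin n)), IsTTDecomposition P ∧ (∀ b ∈ P, IsMotif b) ∧
    (P.filter IsChainMotif).card = chains ∧ (P.filter IsColliderMotif).card = colliders

theorem HasMotifDecomposition.add {m h c l c' l' : ℕ} (hP : HasMotifDecomposition m c l)
    (hQ : HasMotifDecomposition (h + h) c' l') :
    HasMotifDecomposition (m + (h + h)) (c + c') (l + l') := by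
  obtain ⟨P, hP, hPmot, rfl, rfl⟩ := hP
  obtain ⟨Q, hQ, hQmot, rfl, rfl⟩ := hQ
  set L : Fin m ↪o Fin (m + (h + h)) := Fin.castAddOrderEmb (h + h)
  set R : Fin (h + h) ↪o Fin (m + (h + h)) := Fin.natAddOrderEmb m
  have hP' : IsBlockPartition (P.map (blockMap L)) ((ttArcs m).map (arcMap L)) :=
    IsBlockPartition.map _ hP
  have hQ' : IsBlockPartition (Q.map (blockMap R)) ((ttArcs (h + h)).map (arcMap R)) :=
    IsBlockPartition.map _ hQ
  have hPQ := hP'.union hQ' disjoint_ttArcs_castAdd_natAdd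
  have hPQmot : ∀ b ∈ P.map (blockMap L) ∪ Q.map (blockMap R), IsMotif b := by
    simp only [mem_union]
    rintro b (hb | hb)
    exacts [forall_isMotif_map L hPmot b hb, forall_isMotif_map R hQmot b hb]
  have hPne : ∀ b ∈ P.map (blockMap L), b.Nonempty := fun b hb =>
    (forall_isMotif_map L hPmot b hb).nonempty
  have hFchain : (crossForks m h).filter IsChainMotif = ∅ :=
    filter_false_of_mem fun b hb => (forall_isForkMotif_crossForks b hb).not_isChainMotif
  have hFcollider : (crossForks m h).filter IsColliderMotif = ∅ :=
    filter_false_of_mem fun b hb => (forall_isForkMotif_crossForks b hb).not_isColliderMotif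
  have hall : IsBlockPartition (P.map (blockMap L) ∪ Q.map (blockMap R) ∪ crossForks m h)
      (ttArcs (m + (h + h))) := by
    rw [ttArcs_add]
    exact hPQ.union isBlockPartition_crossForks disjoint_ttArcs_add_crossArcs
  have hcard := hPQ.card_filter_union isBlockPartition_crossForks disjoint_ttArcs_add_crossArcs
    fun b hb => (hPQmot b hb).nonempty
  refine ⟨_, hall, ?_, ?_, ?_⟩
  · intro b hb
    rcases mem_union.1 hb with hb | hb
    exacts [hPQmot b hb, Or.inr (Or.inr (forall_isForkMotif_crossForks b hb))]
  · rw [hcard, hP'.card_filter_union hQ' disjoint_ttArcs_castAdd_natAdd hPne,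
      card_filter_isChainMotif_map L hPmot, card_filter_isChainMotif_map R hQmot,
      hFchain, card_empty, add_zero]
  · rw [hcard, hP'.card_filter_union hQ' disjoint_ttArcs_castAdd_natAdd hPne,
      card_filter_isColliderMotif_map L hPmot, card_filter_isColliderMotif_map R hQmot,
      hFcollider, card_empty, add_zero]

theorem hasMotifDecomposition_four : HasMotifDecomposition 4 1 1 := by
  refine ⟨{{(0, 1), (1, 2)}, {(1, 3), (2, 3)}, {(0, 2), (0, 3)}},
    ⟨pairwiseDisjoint_triple (by decide) (by decide) (by decide), by decide⟩, ?_, by decide,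
    by decide⟩
  simp only [mem_insert, mem_singleton, forall_eq_or_imp, forall_eq]
  exact ⟨Or.inl ⟨0, 1, 2, by decide, by decide, rfl⟩,
      Or.inr (Or.inl ⟨1, 2, 3, by decide, by decide, by decide, rfl⟩),
      Or.inr (Or.inr ⟨0, 2, 3, by decide, by decide, by decide, rfl⟩)⟩

-- Stated for `2 + 2` rather than `4` to match the upper part in `HasMotifDecomposition.add`.
theorem hasMotifDecomposition_two_add_two : HasMotifDecomposition (2 + 2) 2 1 := by
  refine ⟨{{(0, 1), (1, 2)}, {(0, 2), (2, 3)}, {(0, 3), (1, 3)}},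
    ⟨pairwiseDisjoint_triple (by decide) (by decide) (by decide), by decide⟩, ?_, by decide,
    by decide⟩
  simp only [mem_insert, mem_singleton, forall_eq_or_imp, forall_eq]
  exact ⟨Or.inl ⟨0, 1, 2, by decide, by decide, rfl⟩,
    Or.inl ⟨0, 2, 3, by decide, by decide, rfl⟩,
    Or.inr (Or.inl ⟨0, 1, 3, by decide, by decide, by decide, rfl⟩)⟩

theorem hasMotifDecomposition_of_le_one {n : ℕ} (hn : n ≤ 1) : HasMotifDecomposition n 0 0 := by
  have : Subsingleton (Fin n) := Fin.subsingleton_iff_le_one.2 hn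
  refine ⟨∅, ⟨by simp, ?_⟩, by simp, by simp, by simp⟩
  ext ⟨u, v⟩
  simp [Subsingleton.elim u v]

theorem hasMotifDecomposition_four_mul_add_one :
    ∀ q : ℕ, HasMotifDecomposition (4 * q + 1) (2 * q) q
  | 0 => hasMotifDecomposition_of_le_one le_rfl
  | q + 1 => (hasMotifDecomposition_four_mul_add_one q).add hasMotifDecomposition_two_add_two

theorem hasMotifDecomposition_four_mul_add_four :
    ∀ q : ℕ, HasMotifDecomposition (4 * q + 4) (2 * q + 1) (q + 1)
  | 0 => hasMotifDecomposition_four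
  | q + 1 => (hasMotifDecomposition_four_mul_add_four q).add hasMotifDecomposition_two_add_two

section Counting

variable {n : ℕ} {P : Finset (Finset (Fin n × Fin n))}

theorem card_eq_card_filter_add_add (hP : ∀ b ∈ P, IsMotif b) :
    P.card = (P.filter IsChainMotif).card + (P.filter IsColliderMotif).card +
      (P.filter IsForkMotif).card := by
  rw [card_filter, card_filter, card_filter, card_eq_sum_ones, ← sum_add_distrib,
    ← sum_add_distrib]
  refine sum_congr rfl fun b hb => ?_
  rcases hP b hb with h | h | h
  · simp [h, h.not_isColliderMotif, h.not_isForkMotif]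
  · simp [h, h.not_isChainMotif, h.not_isForkMotif]
  · simp [h, h.not_isChainMotif, h.not_isColliderMotif]

theorem card_ttArcs (n : ℕ) : (ttArcs n).card = n.choose 2 :=
  Fintype.card_product_filter_lt.trans (by rw [Fintype.card_fin])

theorem IsTTDecomposition.card_filter_isForkMotif (hP : IsTTDecomposition P)
    (hmot : ∀ b ∈ P, IsMotif b) :
    (P.filter IsForkMotif).card =
      n * (n - 1) / 4 - (P.filter IsChainMotif).card - (P.filter IsColliderMotif).card := by
  have hcard : 2 * P.card = n * (n - 1) / 2 := by
    rw [IsBlockPartition.two_mul_card hP fun b hb => (hmot b hb).card_eq_two, card_ttArcs,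
      Nat.choose_two_right]
  rw [card_eq_card_filter_add_add hmot] at hcard
  omega

end Counting

theorem tt_ccf_decomposition_counts (n : ℕ) (hadm : Admissible n) :
    ∃ P : Finset (Finset (Fin n × Fin n)),
      IsTTDecomposition P ∧ (∀ b ∈ P, IsChainMotif b ∨ IsColliderMotif b ∨ IsForkMotif b) ∧
      (P.filter IsChainMotif).card = (n - 1) / 2 ∧
      (P.filter IsColliderMotif).card = n / 4 ∧
      (P.filter IsForkMotif).card = n * (n - 1) / 4 - (n - 1) / 2 - n / 4 := by
  obtain ⟨P, hP, hmot, hchain, hcollider⟩ : HasMotifDecomposition n ((n - 1) / 2) (n / 4) := by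
    rcases hadm with h | h
    · obtain ⟨q, rfl⟩ : 4 ∣ n := Nat.dvd_of_mod_eq_zero h
      rcases q with _ | q
      · exact hasMotifDecomposition_of_le_one zero_le_one
      · convert hasMotifDecomposition_four_mul_add_four q using 1 <;> omega
    · obtain ⟨q, rfl⟩ : ∃ q, n = 4 * q + 1 := ⟨n / 4, by omega⟩
      convert hasMotifDecomposition_four_mul_add_one q using 1 <;> omega
  refine ⟨P, hP, hmot, hchain, hcollider, ?_⟩
  rw [hP.card_filter_isForkMotif hmot, hchain, hcollider]
end

section
/- For every admissible integer n, the maximum number of chains in a chain–collider–fork decomposition of TT_n equals n(n−2)/4 when n is even, and equals (n−1)²/4 when n is odd. -/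
def S (n : ℕ) : ℕ := ∑ v ∈ Finset.range n, min v (n-1-v)

lemma S_succ_succ (n : ℕ) : S (n+2) = S n + n := by
  unfold S
  rw [Finset.sum_range_succ' (fun i => min i (n+2-1-i)) (n+1)]
  have h1 : ∀ i ∈ Finset.range (n+1), min (i+1) (n+2-1-(i+1)) = min i (n-1-i) + if i < n then 1 else 0 := by
    intro i hi
    simp only [Finset.mem_range] at hi
    split <;> omega
  rw [Finset.sum_congr rfl h1, Finset.sum_add_distrib]
  have h2 : (∑ i ∈ Finset.range (n+1), if i < n then 1 else 0) = n := by
    rw [Finset.sum_ite, Finset.sum_const, Finset.sum_const]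
    have : Finset.filter (fun i => i < n) (Finset.range (n+1)) = Finset.range n := by
      ext i; simp only [Finset.mem_filter, Finset.mem_range]; omega
    simp [this]
  have h3 : (∑ i ∈ Finset.range (n+1), min i (n-1-i)) = S n := by
    rw [Finset.sum_range_succ]
    have : min n (n-1-n) = 0 := by omega
    simp [S, this]
  rw [h2, h3]
  simp [S]

lemma quarter_even (k : ℕ) : (2*k) * ((2*k)-2) / 4 = k*(k-1) := by
  rcases k with _ | m
  · simp
  · have h : 2*(m+1)-2 = 2*m := by omega
    have h2 : (2*(m+1)) * (2*(m+1)-2) = 4*((m+1)*m) := by rw [h]; ring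
    rw [h2, Nat.mul_div_cancel_left _ (by norm_num)]
    simp

lemma quarter_odd (k : ℕ) : ((2*k+1)-1)^2 / 4 = k*k := by
  have h : (2*k+1)-1 = 2*k := by omega
  have h2 : (2*k)^2 = 4*(k*k) := by ring
  rw [h, h2, Nat.mul_div_cancel_left _ (by norm_num)]

lemma S_eq (n : ℕ) : S n = if Even n then n * (n-2) / 4 else (n-1)^2 / 4 := by
  induction n using Nat.twoStepInduction with
  | zero => simp [S]
  | one => simp [S]
  | more n ih _ =>
    rw [S_succ_succ, ih]
    rcases Nat.even_or_odd n with h | h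
    · obtain ⟨k, hk⟩ := h
      have hn : n = 2*k := by omega
      subst hn
      have he1 : Even (2*k) := ⟨k, by ring⟩
      have he2 : Even (2*k+2) := ⟨k+1, by ring⟩
      simp only [he1, he2, if_true]
      rw [quarter_even k]
      have : 2*k+2 = 2*(k+1) := by ring
      rw [this, quarter_even (k+1)]
      rcases k with _ | m
      · simp
      · simp only [Nat.add_sub_cancel]
        ring
    · obtain ⟨k, hk⟩ := h
      subst hk
      have ho1 : ¬ Even (2*k+1) := by simp [Nat.even_add_one, Nat.even_mul]
      have ho2 : ¬ Even (2*k+1+2) := by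
        intro ⟨m, hm⟩; omega
      simp only [ho1, ho2, if_false]
      rw [quarter_odd k]
      have : 2*k+1+2 = 2*(k+1)+1 := by ring
      rw [this, quarter_odd (k+1)]
      ring

noncomputable def tailOf {n : ℕ} [NeZero n] (b : Finset (Fin n × Fin n)) : Fin n :=
  if h : IsChainMotif b then h.choose else 0

noncomputable def midOf {n : ℕ} [NeZero n] (b : Finset (Fin n × Fin n)) : Fin n :=
  if h : IsChainMotif b then h.choose_spec.choose else 0

noncomputable def headOf {n : ℕ} [NeZero n] (b : Finset (Fin n × Fin n)) : Fin n :=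
  if h : IsChainMotif b then h.choose_spec.choose_spec.choose else 0

lemma chain_spec {n : ℕ} [NeZero n] {b : Finset (Fin n × Fin n)} (h : IsChainMotif b) :
    tailOf b < midOf b ∧ midOf b < headOf b ∧
      b = {(tailOf b, midOf b), (midOf b, headOf b)} := by
  unfold tailOf midOf headOf
  rw [dif_pos h, dif_pos h, dif_pos h]
  exact ⟨h.choose_spec.choose_spec.choose_spec.1,
    h.choose_spec.choose_spec.choose_spec.2.1,
    h.choose_spec.choose_spec.choose_spec.2.2⟩

lemma chains_le {n : ℕ} (P : Finset (Finset (Fin n × Fin n)))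
    (hd : (P : Set (Finset (Fin n × Fin n))).PairwiseDisjoint id) :
    (P.filter IsChainMotif).card ≤ S n := by
  rcases n with _ | m
  · convert Nat.zero_le _
    rw [Finset.card_eq_zero, Finset.filter_eq_empty_iff]
    rintro b - ⟨i, _, _, _⟩
    exact i.elim0
  have hn : m + 1 = m + 1 := rfl
  generalize hnn : m + 1 = n at *
  have hn0 : NeZero n := ⟨by omega⟩
  set C := P.filter IsChainMotif with hC
  rw [Finset.card_eq_sum_card_fiberwise (f := midOf) (t := Finset.univ)
    (fun b _ => Finset.mem_univ _)]
  have bound : ∀ v : Fin n, (C.filter fun b => midOf b = v).card ≤ min v.1 (n - 1 - v.1) := by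
    intro v
    rw [Nat.le_min]
    have same : ∀ b ∈ C.filter fun b => midOf b = v,
        IsChainMotif b ∧ b ∈ P ∧ (tailOf b, v) ∈ b ∧ (v, headOf b) ∈ b ∧
          tailOf b < v ∧ v < headOf b := by
      intro b hb
      simp only [hC, Finset.mem_filter, and_assoc] at hb
      obtain ⟨hbP, hbc, hmid⟩ := hb
      obtain ⟨h1, h2, h3⟩ := chain_spec hbc
      subst hmid
      refine ⟨hbc, hbP, ?_, ?_, h1, h2⟩
      · have : (tailOf b, midOf b) ∈ ({(tailOf b, midOf b), (midOf b, headOf b)} : Finset _) := by simp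
        rwa [← h3] at this
      · have : (midOf b, headOf b) ∈ ({(tailOf b, midOf b), (midOf b, headOf b)} : Finset _) := by simp
        rwa [← h3] at this
    have injOn : ∀ f : Finset (Fin n × Fin n) → Fin n × Fin n,
        (∀ b ∈ C.filter fun b => midOf b = v, f b ∈ b) →
        Set.InjOn f (C.filter fun b => midOf b = v) := by
      intro f hf b hb b' hb' heq
      by_contra hne
      have hbP := (same b hb).2.1
      have hb'P := (same b' (by exact_mod_cast hb')).2.1
      have h1 : f b ∈ b := hf b hb
      have h2 : f b ∈ b' := heq ▸ hf b' (by exact_mod_cast hb')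
      exact Finset.disjoint_left.mp (hd hbP hb'P hne) h1 h2
    constructor
    · calc (C.filter fun b => midOf b = v).card
          ≤ (Finset.Iio v).card := by
            apply Finset.card_le_card_of_injOn tailOf
            · intro b hb
              exact Finset.mem_Iio.mpr (same b hb).2.2.2.2.1
            · intro b hb b' hb' heq
              have := injOn (fun b => (tailOf b, v)) (fun b hb => (same b hb).2.2.1)
              exact this hb hb' (by simp [heq])
        _ = v.1 := Fin.card_Iio v
    · calc (C.filter fun b => midOf b = v).card
          ≤ (Finset.Ioi v).card := by
            apply Finset.card_le_card_of_injOn headOf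
            · intro b hb
              exact Finset.mem_Ioi.mpr (same b hb).2.2.2.2.2
            · intro b hb b' hb' heq
              have := injOn (fun b => (v, headOf b)) (fun b hb => (same b hb).2.2.2.1)
              exact this hb hb' (by simp [heq])
        _ = n - 1 - v.1 := by rw [Fin.card_Ioi]
  calc (∑ v : Fin n, (C.filter fun b => midOf b = v).card)
      ≤ ∑ v : Fin n, min v.1 (n - 1 - v.1) := Finset.sum_le_sum fun v _ => bound v
    _ = S n := by rw [S, ← Fin.sum_univ_eq_sum_range]

-- construction pieces
def emb (n : ℕ) (v : Fin n) : Fin (n+4) := ⟨v.1 + 2, by omega⟩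
def emap (n : ℕ) (p : Fin n × Fin n) : Fin (n+4) × Fin (n+4) := (emb n p.1, emb n p.2)
def bmap (n : ℕ) (b : Finset (Fin n × Fin n)) : Finset (Fin (n+4) × Fin (n+4)) :=
  b.image (emap n)

@[simp] lemma emb_val (n : ℕ) (v : Fin n) : (emb n v).1 = v.1 + 2 := rfl

lemma emap_inj (n : ℕ) : Function.Injective (emap n) := by
  rintro ⟨a, b⟩ ⟨c, d⟩ h
  simp only [emap, emb, Prod.ext_iff, Fin.ext_iff] at h ⊢
  omega

def z0 (n : ℕ) : Fin (n+4) := ⟨0, by omega⟩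
def z1 (n : ℕ) : Fin (n+4) := ⟨1, by omega⟩
def w0 (n : ℕ) : Fin (n+4) := ⟨n+2, by omega⟩
def w1 (n : ℕ) : Fin (n+4) := ⟨n+3, by omega⟩

@[simp] lemma z0_val (n : ℕ) : (z0 n).1 = 0 := rfl
@[simp] lemma z1_val (n : ℕ) : (z1 n).1 = 1 := rfl
@[simp] lemma w0_val (n : ℕ) : (w0 n).1 = n+2 := rfl
@[simp] lemma w1_val (n : ℕ) : (w1 n).1 = n+3 := rfl

def N1 (n : ℕ) : Finset (Finset (Fin (n+4) × Fin (n+4))) :=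
  Finset.univ.image fun v : Fin n => ({(z0 n, emb n v), (emb n v, w0 n)} : Finset _)
def N2 (n : ℕ) : Finset (Finset (Fin (n+4) × Fin (n+4))) :=
  Finset.univ.image fun v : Fin n => ({(z1 n, emb n v), (emb n v, w1 n)} : Finset _)
def N3 (n : ℕ) : Finset (Finset (Fin (n+4) × Fin (n+4))) :=
  { {(z0 n, z1 n), (z1 n, w1 n)}, {(z1 n, w0 n), (w0 n, w1 n)}, {(z0 n, w0 n), (z0 n, w1 n)} }

def newBlocks (n : ℕ) : Finset (Finset (Fin (n+4) × Fin (n+4))) := N1 n ∪ N2 n ∪ N3 n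

def stepP (n : ℕ) (P : Finset (Finset (Fin n × Fin n))) :
    Finset (Finset (Fin (n+4) × Fin (n+4))) :=
  P.image (bmap n) ∪ newBlocks n

-- coordinate facts
lemma mem_bmap_coords {n : ℕ} {B : Finset (Fin n × Fin n)} {p : Fin (n+4) × Fin (n+4)}
    (h : p ∈ bmap n B) : 2 ≤ p.1.1 ∧ p.2.1 ≤ n+1 := by
  simp only [bmap, Finset.mem_image] at h
  obtain ⟨q, -, rfl⟩ := h
  simp only [emap, emb]
  exact ⟨by omega, by omega⟩

lemma mem_new_coords {n : ℕ} {b : Finset (Fin (n+4) × Fin (n+4))} {p : Fin (n+4) × Fin (n+4)}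
    (hb : b ∈ newBlocks n) (hp : p ∈ b) : p.1.1 ≤ 1 ∨ n+2 ≤ p.2.1 := by
  simp only [newBlocks, N1, N2, N3, Finset.mem_union, Finset.mem_image, Finset.mem_insert,
    Finset.mem_singleton] at hb
  rcases hb with (⟨v, -, rfl⟩ | ⟨v, -, rfl⟩) | (rfl | rfl | rfl) <;>
    simp only [Finset.mem_insert, Finset.mem_singleton] at hp <;>
    rcases hp with rfl | rfl <;> simp

lemma disj_pairs {α : Type*} [DecidableEq α] {a b c d : α}
    (h1 : a ≠ c) (h2 : a ≠ d) (h3 : b ≠ c) (h4 : b ≠ d) :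
    Disjoint ({a, b} : Finset α) {c, d} := by
  simp only [Finset.disjoint_left, Finset.mem_insert, Finset.mem_singleton]
  rintro x (rfl | rfl) <;> tauto

lemma new_disjoint {n : ℕ} {b b' : Finset (Fin (n+4) × Fin (n+4))}
    (hb : b ∈ newBlocks n) (hb' : b' ∈ newBlocks n) (hne : b ≠ b') : Disjoint b b' := by
  simp only [newBlocks, N1, N2, N3, Finset.mem_union, Finset.mem_image, Finset.mem_insert,
    Finset.mem_singleton] at hb hb'
  rcases hb with (⟨v, -, rfl⟩ | ⟨v, -, rfl⟩) | (rfl | rfl | rfl) <;>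
    rcases hb' with (⟨w, -, rfl⟩ | ⟨w, -, rfl⟩) | (rfl | rfl | rfl)
  all_goals try (exact absurd rfl hne)
  all_goals try (have hbv := v.isLt)
  all_goals try (have hbw := w.isLt)
  all_goals first
    | (apply disj_pairs <;>
        (simp only [ne_eq, Prod.ext_iff, Fin.ext_iff, emb_val, z0_val, z1_val, w0_val, w1_val,
          not_and]; omega))
    | (have hvw : v.1 ≠ w.1 := fun h => hne (by rw [show v = w from Fin.ext h])
       apply disj_pairs <;>
        (simp only [ne_eq, Prod.ext_iff, Fin.ext_iff, emb_val, z0_val, z1_val, w0_val, w1_val,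
          not_and]; omega))

lemma step_pairwise {n : ℕ} {P : Finset (Finset (Fin n × Fin n))}
    (hd : (P : Set (Finset (Fin n × Fin n))).PairwiseDisjoint id) :
    ((stepP n P : Finset _) : Set (Finset (Fin (n+4) × Fin (n+4)))).PairwiseDisjoint id := by
  intro b hb b' hb' hne
  simp only [Finset.coe_union, Set.mem_union, Finset.mem_coe, stepP, Finset.mem_image] at hb hb'
  have cross : ∀ c c' : Finset (Fin (n+4) × Fin (n+4)),
      (∃ B ∈ P, bmap n B = c) → c' ∈ newBlocks n → Disjoint c c' := by
    rintro c c' ⟨B, -, rfl⟩ hc'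
    rw [Finset.disjoint_left]
    intro p hp hp'
    have h1 := mem_bmap_coords hp
    have h2 := mem_new_coords hc' hp'
    omega
  rcases hb with ⟨B, hB, rfl⟩ | hb
  · rcases hb' with ⟨B', hB', rfl⟩ | hb'
    · have hBB : B ≠ B' := fun h => hne (by rw [h])
      have := hd hB hB' hBB
      simp only [Function.onFun, id_eq] at this ⊢
      unfold bmap
      rw [Finset.disjoint_image (emap_inj n)]
      exact this
    · exact cross _ _ ⟨B, hB, rfl⟩ hb'
  · rcases hb' with ⟨B', hB', rfl⟩ | hb'
    · exact (cross _ _ ⟨B', hB', rfl⟩ hb).symm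
    · exact new_disjoint hb hb' hne

lemma step_sup {n : ℕ} {P : Finset (Finset (Fin n × Fin n))}
    (hs : P.sup id = ttArcs n) :
    (stepP n P).sup id = ttArcs (n+4) := by
  ext p
  obtain ⟨p1, p2⟩ := p
  simp only [Finset.mem_sup, ttArcs, Finset.mem_filter, Finset.mem_univ, true_and, id]
  constructor
  · rintro ⟨b, hb, hp⟩
    simp only [stepP, Finset.mem_union, Finset.mem_image] at hb
    rcases hb with ⟨B, hB, rfl⟩ | hb
    · simp only [bmap, Finset.mem_image] at hp
      obtain ⟨q, hq, hqe⟩ := hp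
      have : q ∈ ttArcs n := by
        rw [← hs]; exact Finset.mem_sup.mpr ⟨B, hB, hq⟩
      simp only [ttArcs, Finset.mem_filter, Finset.mem_univ, true_and] at this
      have h1' : (emb n q.1) = p1 := congrArg Prod.fst hqe
      have h2' : (emb n q.2) = p2 := congrArg Prod.snd hqe
      rw [Fin.lt_def] at this ⊢
      rw [← h1', ← h2']
      simp only [emb_val]
      omega
    · have := mem_new_coords hb hp
      simp only [newBlocks, N1, N2, N3, Finset.mem_union, Finset.mem_image, Finset.mem_insert,
        Finset.mem_singleton] at hb
      rcases hb with (⟨v, -, rfl⟩ | ⟨v, -, rfl⟩) | (rfl | rfl | rfl) <;>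
        simp only [Finset.mem_insert, Finset.mem_singleton, Prod.mk.injEq] at hp <;>
        rcases hp with ⟨rfl, rfl⟩ | ⟨rfl, rfl⟩ <;>
        (simp only [Fin.lt_def, emb_val, z0_val, z1_val, w0_val, w1_val]; omega)
  · intro hlt
    have hlt : p1.1 < p2.1 := hlt
    by_cases hmid : 2 ≤ p1.1 ∧ p2.1 ≤ n+1
    · -- old arc
      have h1 : p1.1 - 2 < n := by omega
      have h2 : p2.1 - 2 < n := by omega
      set q : Fin n × Fin n := (⟨p1.1 - 2, h1⟩, ⟨p2.1 - 2, h2⟩) with hq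
      have hqtt : q ∈ ttArcs n := by
        simp only [ttArcs, Finset.mem_filter, Finset.mem_univ, true_and, Fin.lt_def, hq]
        omega
      rw [← hs, Finset.mem_sup] at hqtt
      obtain ⟨B, hB, hqB⟩ := hqtt
      refine ⟨bmap n B, ?_, ?_⟩
      · simp only [stepP, Finset.mem_union, Finset.mem_image]
        exact Or.inl ⟨B, hB, rfl⟩
      · simp only [bmap, Finset.mem_image]
        refine ⟨q, hqB, ?_⟩
        simp only [emap, hq, Prod.ext_iff, Fin.ext_iff, emb_val]
        exact ⟨by omega, by omega⟩
    · -- new arc: find its new block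
      push_neg at hmid
      have hp2 := p1.isLt
      have hp3 := p2.isLt
      have key : ∃ b ∈ newBlocks n, (p1, p2) ∈ b := by
        rcases Nat.lt_or_ge p1.1 1 with h0 | h0
        · -- p1 = 0
          have hz : p1 = z0 n := Fin.ext (by simp only [z0_val]; omega)
          rcases Nat.lt_or_ge p2.1 2 with hb0 | hb0
          · refine ⟨{(z0 n, z1 n), (z1 n, w1 n)}, by simp [newBlocks, N3], ?_⟩
            have h2 : p2 = z1 n := Fin.ext (by simp only [z1_val]; omega)
            exact Finset.mem_insert.mpr (Or.inl (Prod.ext hz h2))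
          · rcases Nat.lt_or_ge p2.1 (n+2) with hb1 | hb1
            · refine ⟨{(z0 n, emb n ⟨p2.1-2, by omega⟩), (emb n ⟨p2.1-2, by omega⟩, w0 n)}, ?_, ?_⟩
              · simp only [newBlocks, N1, Finset.mem_union, Finset.mem_image]
                exact Or.inl (Or.inl ⟨⟨p2.1-2, by omega⟩, Finset.mem_univ _, rfl⟩)
              · have h2 : p2 = emb n ⟨p2.1-2, by omega⟩ := Fin.ext (by simp only [emb_val]; omega)
                exact Finset.mem_insert.mpr (Or.inl (Prod.ext hz h2))
            · refine ⟨{(z0 n, w0 n), (z0 n, w1 n)}, by simp [newBlocks, N3], ?_⟩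
              rcases Nat.lt_or_ge p2.1 (n+3) with hb2 | hb2
              · have h2 : p2 = w0 n := Fin.ext (by simp only [w0_val]; omega)
                exact Finset.mem_insert.mpr (Or.inl (Prod.ext hz h2))
              · have h2 : p2 = w1 n := Fin.ext (by simp only [w1_val]; omega)
                exact Finset.mem_insert.mpr (Or.inr (Finset.mem_singleton.mpr (Prod.ext hz h2)))
        · rcases Nat.lt_or_ge p1.1 2 with h1 | h1
          · -- p1 = 1
            have hz : p1 = z1 n := Fin.ext (by simp only [z1_val]; omega)
            rcases Nat.lt_or_ge p2.1 (n+2) with hb1 | hb1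
            · refine ⟨{(z1 n, emb n ⟨p2.1-2, by omega⟩), (emb n ⟨p2.1-2, by omega⟩, w1 n)}, ?_, ?_⟩
              · simp only [newBlocks, N2, Finset.mem_union, Finset.mem_image]
                exact Or.inl (Or.inr ⟨⟨p2.1-2, by omega⟩, Finset.mem_univ _, rfl⟩)
              · have h2 : p2 = emb n ⟨p2.1-2, by omega⟩ := Fin.ext (by simp only [emb_val]; omega)
                exact Finset.mem_insert.mpr (Or.inl (Prod.ext hz h2))
            · rcases Nat.lt_or_ge p2.1 (n+3) with hb2 | hb2
              · refine ⟨{(z1 n, w0 n), (w0 n, w1 n)}, by simp [newBlocks, N3], ?_⟩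
                have h2 : p2 = w0 n := Fin.ext (by simp only [w0_val]; omega)
                exact Finset.mem_insert.mpr (Or.inl (Prod.ext hz h2))
              · refine ⟨{(z0 n, z1 n), (z1 n, w1 n)}, by simp [newBlocks, N3], ?_⟩
                have h2 : p2 = w1 n := Fin.ext (by simp only [w1_val]; omega)
                exact Finset.mem_insert.mpr (Or.inr (Finset.mem_singleton.mpr (Prod.ext hz h2)))
          · rcases Nat.lt_or_ge p1.1 (n+2) with hm | hm
            · -- p1 inner, p2 ∈ {n+2,n+3}
              have hin : p2.1 ≥ n+2 := by omega
              have hz : p1 = emb n ⟨p1.1-2, by omega⟩ := Fin.ext (by simp only [emb_val]; omega)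
              rcases Nat.lt_or_ge p2.1 (n+3) with hb2 | hb2
              · refine ⟨{(z0 n, emb n ⟨p1.1-2, by omega⟩), (emb n ⟨p1.1-2, by omega⟩, w0 n)}, ?_, ?_⟩
                · simp only [newBlocks, N1, Finset.mem_union, Finset.mem_image]
                  exact Or.inl (Or.inl ⟨⟨p1.1-2, by omega⟩, Finset.mem_univ _, rfl⟩)
                · have h2 : p2 = w0 n := Fin.ext (by simp only [w0_val]; omega)
                  exact Finset.mem_insert.mpr (Or.inr (Finset.mem_singleton.mpr (Prod.ext hz h2)))
              · refine ⟨{(z1 n, emb n ⟨p1.1-2, by omega⟩), (emb n ⟨p1.1-2, by omega⟩, w1 n)}, ?_, ?_⟩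
                · simp only [newBlocks, N2, Finset.mem_union, Finset.mem_image]
                  exact Or.inl (Or.inr ⟨⟨p1.1-2, by omega⟩, Finset.mem_univ _, rfl⟩)
                · have h2 : p2 = w1 n := Fin.ext (by simp only [w1_val]; omega)
                  exact Finset.mem_insert.mpr (Or.inr (Finset.mem_singleton.mpr (Prod.ext hz h2)))
            · -- p1 = n+2, p2 = n+3
              refine ⟨{(z1 n, w0 n), (w0 n, w1 n)}, by simp [newBlocks, N3], ?_⟩
              have hz : p1 = w0 n := Fin.ext (by simp only [w0_val]; omega)
              have h2 : p2 = w1 n := Fin.ext (by simp only [w1_val]; omega)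
              exact Finset.mem_insert.mpr (Or.inr (Finset.mem_singleton.mpr (Prod.ext hz h2)))
      obtain ⟨b, hb, hpb⟩ := key
      exact ⟨b, by simp only [stepP, Finset.mem_union]; exact Or.inr hb, hpb⟩

lemma bmap_pair {n : ℕ} (a b : Fin n × Fin n) :
    bmap n {a, b} = {emap n a, emap n b} := by
  simp [bmap, Finset.image_insert]

lemma emb_lt {n : ℕ} {a b : Fin n} (h : a < b) : emb n a < emb n b := by
  rw [Fin.lt_def] at h ⊢; simp only [emb_val]; omega

lemma emb_ne {n : ℕ} {a b : Fin n} (h : a ≠ b) : emb n a ≠ emb n b := by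
  intro hh; exact h (by rw [Fin.ext_iff] at hh ⊢; simp only [emb_val] at hh; omega)

lemma bmap_chain {n : ℕ} {B : Finset (Fin n × Fin n)} (h : IsChainMotif B) :
    IsChainMotif (bmap n B) := by
  obtain ⟨i, j, k, h1, h2, rfl⟩ := h
  exact ⟨emb n i, emb n j, emb n k, emb_lt h1, emb_lt h2, by rw [bmap_pair]; rfl⟩

lemma bmap_collider {n : ℕ} {B : Finset (Fin n × Fin n)} (h : IsColliderMotif B) :
    IsColliderMotif (bmap n B) := by
  obtain ⟨i, k, j, h1, h2, h3, rfl⟩ := h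
  exact ⟨emb n i, emb n k, emb n j, emb_lt h1, emb_lt h2, emb_ne h3, by rw [bmap_pair]; rfl⟩

lemma bmap_fork {n : ℕ} {B : Finset (Fin n × Fin n)} (h : IsForkMotif B) :
    IsForkMotif (bmap n B) := by
  obtain ⟨i, j, k, h1, h2, h3, rfl⟩ := h
  exact ⟨emb n i, emb n j, emb n k, emb_lt h1, emb_lt h2, emb_ne h3, by rw [bmap_pair]; rfl⟩

lemma pair_mem_iff {α : Type*} [DecidableEq α] {x a b : α} :
    x ∈ ({a, b} : Finset α) ↔ x = a ∨ x = b := by simp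

lemma chain_not_collider {n : ℕ} {b : Finset (Fin n × Fin n)}
    (hc : IsChainMotif b) (hk : IsColliderMotif b) : False := by
  obtain ⟨i, j, k, h1, h2, rfl⟩ := hc
  obtain ⟨i', k', j', g1, g2, g3, he⟩ := hk
  have m1 : (i, j) ∈ ({(i', j'), (k', j')} : Finset _) := by
    rw [← he]; simp
  have m2 : (j, k) ∈ ({(i', j'), (k', j')} : Finset _) := by
    rw [← he]; simp
  rw [pair_mem_iff] at m1 m2
  have e1 : j = j' := by rcases m1 with h | h <;> exact congrArg Prod.snd h
  have e2 : k = j' := by rcases m2 with h | h <;> exact congrArg Prod.snd h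
  rw [← e2] at e1
  exact absurd e1 (ne_of_lt h2)

lemma chain_not_fork {n : ℕ} {b : Finset (Fin n × Fin n)}
    (hc : IsChainMotif b) (hk : IsForkMotif b) : False := by
  obtain ⟨i, j, k, h1, h2, rfl⟩ := hc
  obtain ⟨i', j', k', g1, g2, g3, he⟩ := hk
  have m1 : (i, j) ∈ ({(i', j'), (i', k')} : Finset _) := by
    rw [← he]; simp
  have m2 : (j, k) ∈ ({(i', j'), (i', k')} : Finset _) := by
    rw [← he]; simp
  rw [pair_mem_iff] at m1 m2
  have e1 : i = i' := by rcases m1 with h | h <;> exact congrArg Prod.fst h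
  have e2 : j = i' := by rcases m2 with h | h <;> exact congrArg Prod.fst h
  exact absurd (e2.trans e1.symm) (ne_of_gt h1)

lemma new_motifs {n : ℕ} {b : Finset (Fin (n+4) × Fin (n+4))} (hb : b ∈ newBlocks n) :
    IsChainMotif b ∨ IsColliderMotif b ∨ IsForkMotif b := by
  simp only [newBlocks, N1, N2, N3, Finset.mem_union, Finset.mem_image, Finset.mem_insert,
    Finset.mem_singleton] at hb
  rcases hb with (⟨v, -, rfl⟩ | ⟨v, -, rfl⟩) | (rfl | rfl | rfl)
  · exact Or.inl ⟨z0 n, emb n v, w0 n, by simp [Fin.lt_def], by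
      simp only [Fin.lt_def, emb_val, w0_val]; exact by have := v.isLt; omega, rfl⟩
  · exact Or.inl ⟨z1 n, emb n v, w1 n, by simp [Fin.lt_def], by
      simp only [Fin.lt_def, emb_val, w1_val]; exact by have := v.isLt; omega, rfl⟩
  · exact Or.inl ⟨z0 n, z1 n, w1 n, by simp [Fin.lt_def], by simp [Fin.lt_def], rfl⟩
  · exact Or.inl ⟨z1 n, w0 n, w1 n, by simp [Fin.lt_def], by simp [Fin.lt_def], rfl⟩
  · exact Or.inr (Or.inr ⟨z0 n, w0 n, w1 n, by simp [Fin.lt_def], by simp [Fin.lt_def],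
      by simp [ne_eq, Fin.ext_iff], rfl⟩)

lemma step_motifs {n : ℕ} {P : Finset (Finset (Fin n × Fin n))}
    (hm : ∀ b ∈ P, IsChainMotif b ∨ IsColliderMotif b ∨ IsForkMotif b) :
    ∀ b ∈ stepP n P, IsChainMotif b ∨ IsColliderMotif b ∨ IsForkMotif b := by
  intro b hb
  simp only [stepP, Finset.mem_union, Finset.mem_image] at hb
  rcases hb with ⟨B, hB, rfl⟩ | hb
  · rcases hm B hB with h | h | h
    · exact Or.inl (bmap_chain h)
    · exact Or.inr (Or.inl (bmap_collider h))
    · exact Or.inr (Or.inr (bmap_fork h))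
  · exact new_motifs hb

lemma new_first_coord {n : ℕ} {b : Finset (Fin (n+4) × Fin (n+4))} (hb : b ∈ newBlocks n) :
    ∃ p ∈ b, p.1.1 ≤ 1 := by
  simp only [newBlocks, N1, N2, N3, Finset.mem_union, Finset.mem_image, Finset.mem_insert,
    Finset.mem_singleton] at hb
  rcases hb with (⟨v, -, rfl⟩ | ⟨v, -, rfl⟩) | (rfl | rfl | rfl) <;>
    exact ⟨_, Finset.mem_insert_self _ _, by simp⟩

lemma image_new_disjoint {n : ℕ} (P : Finset (Finset (Fin n × Fin n))) :
    Disjoint (P.image (bmap n)) (newBlocks n) := by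
  rw [Finset.disjoint_left]
  rintro b hb hb'
  simp only [Finset.mem_image] at hb
  obtain ⟨B, -, rfl⟩ := hb
  obtain ⟨p, hp, hple⟩ := new_first_coord hb'
  have := mem_bmap_coords hp
  omega

lemma bmap_inj (n : ℕ) : Function.Injective (bmap n) :=
  Finset.image_injective (emap_inj n)

lemma image_filter_chain {n : ℕ} {P : Finset (Finset (Fin n × Fin n))}
    (hm : ∀ b ∈ P, IsChainMotif b ∨ IsColliderMotif b ∨ IsForkMotif b) :
    (P.image (bmap n)).filter IsChainMotif = (P.filter IsChainMotif).image (bmap n) := by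
  ext b
  simp only [Finset.mem_filter, Finset.mem_image]
  constructor
  · rintro ⟨⟨B, hB, rfl⟩, hc⟩
    refine ⟨B, ⟨hB, ?_⟩, rfl⟩
    rcases hm B hB with h | h | h
    · exact h
    · exact absurd (bmap_collider h) (fun hk => chain_not_collider hc hk)
    · exact absurd (bmap_fork h) (fun hk => chain_not_fork hc hk)
  · rintro ⟨B, ⟨hB, hc⟩, rfl⟩
    exact ⟨⟨B, hB, rfl⟩, bmap_chain hc⟩

lemma blk_ne {n : ℕ} {a b c d : Fin (n+4) × Fin (n+4)}
    (h : a ≠ c ∧ a ≠ d) : ({a, b} : Finset _) ≠ {c, d} := by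
  intro he
  have : a ∈ ({c, d} : Finset _) := by rw [← he]; simp
  rw [pair_mem_iff] at this
  tauto

lemma N1_card (n : ℕ) : (N1 n).card = n := by
  rw [N1, Finset.card_image_of_injective _ ?_, Finset.card_univ, Fintype.card_fin]
  intro v w h
  dsimp only at h
  have : (z0 n, emb n v) ∈ ({(z0 n, emb n w), (emb n w, w0 n)} : Finset _) := by
    rw [← h]; simp
  rw [pair_mem_iff] at this
  rcases this with h' | h' <;>
    (simp only [Prod.ext_iff, Fin.ext_iff, emb_val, z0_val, w0_val] at h'
     exact Fin.ext (by omega))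

lemma N2_card (n : ℕ) : (N2 n).card = n := by
  rw [N2, Finset.card_image_of_injective _ ?_, Finset.card_univ, Fintype.card_fin]
  intro v w h
  dsimp only at h
  have : (z1 n, emb n v) ∈ ({(z1 n, emb n w), (emb n w, w1 n)} : Finset _) := by
    rw [← h]; simp
  rw [pair_mem_iff] at this
  rcases this with h' | h' <;>
    (simp only [Prod.ext_iff, Fin.ext_iff, emb_val, z1_val, w1_val] at h'
     exact Fin.ext (by omega))

lemma new_filter_card (n : ℕ) : ((newBlocks n).filter IsChainMotif).card = 2*n + 2 := by
  have hN1 : (N1 n).filter IsChainMotif = N1 n := by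
    apply Finset.filter_true_of_mem
    intro b hb
    simp only [N1, Finset.mem_image] at hb
    obtain ⟨v, -, rfl⟩ := hb
    exact ⟨z0 n, emb n v, w0 n, by simp [Fin.lt_def],
      by simp only [Fin.lt_def, emb_val, w0_val]; have := v.isLt; omega, rfl⟩
  have hN2 : (N2 n).filter IsChainMotif = N2 n := by
    apply Finset.filter_true_of_mem
    intro b hb
    simp only [N2, Finset.mem_image] at hb
    obtain ⟨v, -, rfl⟩ := hb
    exact ⟨z1 n, emb n v, w1 n, by simp [Fin.lt_def],
      by simp only [Fin.lt_def, emb_val, w1_val]; have := v.isLt; omega, rfl⟩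
  have hA : IsChainMotif ({(z0 n, z1 n), (z1 n, w1 n)} : Finset _) :=
    ⟨z0 n, z1 n, w1 n, by simp [Fin.lt_def], by simp [Fin.lt_def], rfl⟩
  have hB : IsChainMotif ({(z1 n, w0 n), (w0 n, w1 n)} : Finset _) :=
    ⟨z1 n, w0 n, w1 n, by simp [Fin.lt_def], by simp [Fin.lt_def], rfl⟩
  have hF : ¬ IsChainMotif ({(z0 n, w0 n), (z0 n, w1 n)} : Finset _) := by
    intro hc
    exact chain_not_fork hc ⟨z0 n, w0 n, w1 n, by simp [Fin.lt_def], by simp [Fin.lt_def],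
      by simp [ne_eq, Fin.ext_iff], rfl⟩
  have hN3 : (N3 n).filter IsChainMotif
      = ({ {(z0 n, z1 n), (z1 n, w1 n)}, {(z1 n, w0 n), (w0 n, w1 n)} } :
          Finset (Finset (Fin (n+4) × Fin (n+4)))) := by
    rw [N3]
    rw [Finset.filter_insert, Finset.filter_insert, Finset.filter_singleton]
    rw [if_pos hA, if_pos hB, if_neg hF]
    simp
  have d12 : Disjoint (N1 n) (N2 n) := by
    rw [Finset.disjoint_left]
    rintro b hb hb'
    simp only [N1, N2, Finset.mem_image] at hb hb'
    obtain ⟨v, -, rfl⟩ := hb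
    obtain ⟨w, -, h⟩ := hb'
    have : (z1 n, emb n w) ∈ ({(z0 n, emb n v), (emb n v, w0 n)} : Finset _) := by
      rw [← h]; simp
    rw [pair_mem_iff] at this
    have hv := v.isLt
    rcases this with h' | h' <;>
      (simp only [Prod.ext_iff, Fin.ext_iff, emb_val, z0_val, z1_val, w0_val] at h'; omega)
  have d3 : ∀ b ∈ N1 n ∪ N2 n,
      b ∉ ({ {(z0 n, z1 n), (z1 n, w1 n)}, {(z1 n, w0 n), (w0 n, w1 n)} } :
        Finset (Finset (Fin (n+4) × Fin (n+4)))) := by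
    intro b hb
    simp only [N1, N2, Finset.mem_union, Finset.mem_image] at hb
    intro hmem
    rw [pair_mem_iff] at hmem
    rcases hb with ⟨v, -, rfl⟩ | ⟨v, -, rfl⟩ <;> rcases hmem with h | h <;>
      · have hlt := v.isLt
        rw [Finset.ext_iff] at h
        have hm1 := (h _).mp (Finset.mem_insert_self _ _)
        simp only [Finset.mem_insert, Finset.mem_singleton, Prod.ext_iff, Fin.ext_iff, emb_val,
          z0_val, z1_val, w0_val, w1_val] at hm1
        omega
  have hAB : ({(z0 n, z1 n), (z1 n, w1 n)} : Finset (Fin (n+4) × Fin (n+4)))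
      ≠ {(z1 n, w0 n), (w0 n, w1 n)} := by
    apply blk_ne
    refine ⟨?_, ?_⟩ <;>
      · simp only [ne_eq, Prod.ext_iff, Fin.ext_iff, z0_val, z1_val, w0_val, w1_val, not_and]
        omega
  rw [newBlocks, Finset.filter_union, Finset.filter_union, hN1, hN2, hN3]
  rw [Finset.card_union_of_disjoint ?_, Finset.card_union_of_disjoint d12, N1_card, N2_card]
  · rw [Finset.card_insert_of_notMem (by simpa using hAB), Finset.card_singleton]
    ring
  · rw [Finset.disjoint_right]
    intro b hb hb'
    exact d3 b hb' hb

lemma step_count {n : ℕ} {P : Finset (Finset (Fin n × Fin n))}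
    (hm : ∀ b ∈ P, IsChainMotif b ∨ IsColliderMotif b ∨ IsForkMotif b) :
    ((stepP n P).filter IsChainMotif).card = (P.filter IsChainMotif).card + (2*n + 2) := by
  rw [stepP, Finset.filter_union]
  rw [Finset.card_union_of_disjoint
    (Finset.disjoint_filter_filter (image_new_disjoint P))]
  rw [image_filter_chain hm, Finset.card_image_of_injective _ (bmap_inj n), new_filter_card]

lemma S_add_four (m : ℕ) : S (m+4) = S m + (2*m + 2) := by
  have h1 := S_succ_succ m
  have h2 := S_succ_succ (m+2)
  rw [show m+2+2 = m+4 from rfl] at h2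
  omega

lemma ttArcs_zero : ttArcs 0 = ∅ := by
  ext p; exact p.1.elim0

lemma ttArcs_one : ttArcs 1 = ∅ := by
  ext p
  simp only [ttArcs, Finset.mem_filter, Finset.mem_univ, true_and, Finset.notMem_empty,
    iff_false, Fin.lt_def]
  have := p.1.isLt
  have := p.2.isLt
  omega

lemma exists_decomp : ∀ n : ℕ, Admissible n → ∃ P : Finset (Finset (Fin n × Fin n)),
    IsTTDecomposition P ∧ (∀ b ∈ P, IsChainMotif b ∨ IsColliderMotif b ∨ IsForkMotif b) ∧
    (P.filter IsChainMotif).card = S n := by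
  intro n
  induction n using Nat.strong_induction_on with
  | _ n ih =>
    intro hadm
    match n, ih with
    | 0, _ =>
      refine ⟨∅, ⟨by simp, ?_⟩, by simp, by simp [S]⟩
      rw [Finset.sup_empty, ttArcs_zero]
      rfl
    | 1, _ =>
      refine ⟨∅, ⟨by simp, ?_⟩, by simp, by simp [S]⟩
      rw [Finset.sup_empty, ttArcs_one]
      rfl
    | 2, _ => exact absurd hadm (by simp [Admissible])
    | 3, _ => exact absurd hadm (by simp [Admissible])
    | (m+4), ih =>
      have hadm' : Admissible m := by
        rcases hadm with h | h
        · exact Or.inl (by omega)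
        · exact Or.inr (by omega)
      obtain ⟨P, ⟨hd, hs⟩, hm, hc⟩ := ih m (by omega) hadm'
      refine ⟨stepP m P, ⟨step_pairwise hd, step_sup hs⟩, step_motifs hm, ?_⟩
      rw [step_count hm, hc, S_add_four]

theorem tt_max_chains_in_decomposition (n : ℕ) (hadm : Admissible n) :
    IsGreatest
      {m : ℕ | ∃ P : Finset (Finset (Fin n × Fin n)),
        IsTTDecomposition P ∧ (∀ b ∈ P, IsChainMotif b ∨ IsColliderMotif b ∨ IsForkMotif b) ∧ (P.filter IsChainMotif).card = m}
      (if Even n then n * (n - 2) / 4 else (n - 1) ^ 2 / 4) := by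
  constructor
  · obtain ⟨P, hdec, hm, hc⟩ := exists_decomp n hadm
    exact ⟨P, hdec, hm, hc.trans (S_eq n)⟩
  · rintro m ⟨P, ⟨hd, hs⟩, hm, rfl⟩
    rw [← S_eq]
    exact chains_le P hd
end

section
/- For every positive integer n, the chain-packing number of TT_n (the maximum size of a family of pairwise arc-disjoint chains in TT_n) equals n(n−2)/4 when n is even, and equals (n−1)²/4 when n is odd. -/
/-!
Every chain has a middle vertex `j`, and pairwise arc-disjoint chains with middle `j` use distinct
arcs into `j` and distinct arcs out of `j`, so there are at most `min j (n - 1 - j)` of them.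
Summing over `j` gives `⌊n / 2⌋ * ⌊(n - 1) / 2⌋`, the claimed value. The bound is attained:
for `j` below the centre (`2 * j < n`) take every in-arc `(a, j)` together with the out-arc
`(j, n - j + a)`, and for `j` above it every out-arc `(j, j + a + 1)` together with the in-arc
`(a, j)`, `a < n - 1 - j`.
-/

open Finset

theorem card_le_card_of_pairwiseDisjoint_of_inter_nonempty {α : Type*} [DecidableEq α]
    {F : Finset (Finset α)} {S : Finset α} (hF : (F : Set (Finset α)).PairwiseDisjoint id)
    (hS : ∀ b ∈ F, (b ∩ S).Nonempty) : #F ≤ #S :=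
  calc #F ≤ #(F.biUnion (· ∩ S)) :=
        card_le_card_biUnion (hF.mono fun _ => inter_subset_left) hS
    _ ≤ #S := card_le_card (biUnion_subset.2 fun _ _ => inter_subset_right)

theorem Nat.div_two_mul_pred_div_two_add_two (n : ℕ) :
    (n + 2) / 2 * ((n + 1) / 2) = n / 2 * ((n - 1) / 2) + n := by
  rcases n with _ | n
  · rfl
  · have hsum : (n + 1) / 2 + n / 2 = n := by omega
    rw [show (n + 1 + 2) / 2 = (n + 1) / 2 + 1 by omega, show (n + 1 + 1) / 2 = n / 2 + 1 by omega,
      Nat.add_sub_cancel]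
    nlinarith [hsum]

theorem sum_range_min_eq_div_two_mul (n : ℕ) :
    ∑ j ∈ range n, min j (n - 1 - j) = n / 2 * ((n - 1) / 2) := by
  induction n using Nat.twoStepInduction with
  | zero => rfl
  | one => rfl
  | more n ih _ =>
    have hshift : ∀ j ∈ range n, min (j + 1) (n + 2 - 1 - (j + 1)) = min j (n - 1 - j) + 1 :=
      fun j hj => by simp only [mem_range] at hj; omega
    rw [sum_range_succ', sum_range_succ, sum_congr rfl hshift, sum_add_distrib, ih, sum_const,
      card_range, smul_eq_mul, mul_one, show n + 2 - 1 = n + 1 by omega,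
      Nat.div_two_mul_pred_div_two_add_two]
    omega

theorem ite_even_eq_div_two_mul (n : ℕ) :
    (if Even n then n * (n - 2) / 4 else (n - 1) ^ 2 / 4) = n / 2 * ((n - 1) / 2) := by
  obtain ⟨m, rfl | rfl⟩ := Nat.even_or_odd' n
  · rw [if_pos (even_two_mul m), show 2 * m - 2 = 2 * (m - 1) by omega,
      show 2 * m * (2 * (m - 1)) = 4 * (m * (m - 1)) by ring, Nat.mul_div_cancel_left _ four_pos,
      show (2 * m - 1) / 2 = m - 1 by omega, Nat.mul_div_cancel_left _ two_pos]
  · rw [if_neg (Nat.not_even_iff_odd.2 (odd_two_mul_add_one m)), Nat.add_sub_cancel,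
      show (2 * m) ^ 2 = 4 * (m * m) by ring, Nat.mul_div_cancel_left _ four_pos,
      show (2 * m + 1) / 2 = m by omega, Nat.mul_div_cancel_left _ two_pos]

namespace TT

variable {n : ℕ}

def inArcs (j : Fin n) : Finset (Fin n × Fin n) := (Iio j).image (·, j)

def outArcs (j : Fin n) : Finset (Fin n × Fin n) := (Ioi j).image (j, ·)

theorem card_inArcs (j : Fin n) : #(inArcs j) = j := by
  rw [inArcs, card_image_of_injective _ fun _ _ h => (Prod.mk.inj h).1, Fin.card_Iio]

theorem card_outArcs (j : Fin n) : #(outArcs j) = n - 1 - j := by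
  rw [outArcs, card_image_of_injective _ fun _ _ h => (Prod.mk.inj h).2, Fin.card_Ioi]

theorem _root_.IsChainMotif.exists_inter_inArcs_inter_outArcs {b : Finset (Fin n × Fin n)}
    (hb : IsChainMotif b) : ∃ j, (b ∩ inArcs j).Nonempty ∧ (b ∩ outArcs j).Nonempty := by
  obtain ⟨i, j, k, hij, hjk, rfl⟩ := hb
  exact ⟨j, ⟨(i, j), by simp [inArcs, hij]⟩, ⟨(j, k), by simp [outArcs, hjk]⟩⟩

theorem card_le_sum_min_of_isChainMotif {F : Finset (Finset (Fin n × Fin n))}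
    (hF : (F : Set (Finset (Fin n × Fin n))).PairwiseDisjoint id)
    (hchain : ∀ b ∈ F, IsChainMotif b) : #F ≤ ∑ j : Fin n, min (j : ℕ) (n - 1 - j) := by
  set middleAt : Fin n → Finset (Finset (Fin n × Fin n)) := fun j =>
    F.filter fun b => (b ∩ inArcs j).Nonempty ∧ (b ∩ outArcs j).Nonempty
  have hcover : F ⊆ univ.biUnion middleAt := fun b hb => by
    obtain ⟨j, hj⟩ := (hchain b hb).exists_inter_inArcs_inter_outArcs
    exact mem_biUnion.2 ⟨j, mem_univ j, mem_filter.2 ⟨hb, hj⟩⟩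
  have hmiddleAt : ∀ j, #(middleAt j) ≤ min (j : ℕ) (n - 1 - j) := fun j => by
    have hdisj : (middleAt j : Set (Finset (Fin n × Fin n))).PairwiseDisjoint id :=
      hF.subset (coe_subset.2 (filter_subset _ F))
    refine le_min ?_ ?_
    · exact card_inArcs j ▸ card_le_card_of_pairwiseDisjoint_of_inter_nonempty hdisj
        fun b hb => (mem_filter.1 hb).2.1
    · exact card_outArcs j ▸ card_le_card_of_pairwiseDisjoint_of_inter_nonempty hdisj
        fun b hb => (mem_filter.1 hb).2.2
  calc #F ≤ #(univ.biUnion middleAt) := card_le_card hcover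
    _ ≤ ∑ j, #(middleAt j) := card_biUnion_le
    _ ≤ ∑ j : Fin n, min (j : ℕ) (n - 1 - j) := sum_le_sum fun j _ => hmiddleAt j

def packingHead (n j a : ℕ) : ℕ := if 2 * j < n then n + a - j else j + a + 1

theorem lt_packingHead (n j a : ℕ) : j < packingHead n j a := by
  unfold packingHead; split_ifs <;> omega

theorem packingHead_lt {j a : ℕ} (ha : a < min j (n - 1 - j)) : packingHead n j a < n := by
  unfold packingHead; split_ifs <;> omega

theorem packingHead_injective (n j : ℕ) : Function.Injective (packingHead n j) := fun a a' h => by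
  unfold packingHead at h; split_ifs at h <;> omega

/-- An arc `(x, y)` is used as the in-arc of `y` only if `2 * y < n` or `x + y ≤ n - 2`, and as the
out-arc of `x` only if `n ≤ 2 * x` or `n ≤ x + y`; as `x < y`, never both. -/
theorem packingHead_ne_of_eq {j a j' a' : ℕ} (ha : a < min j (n - 1 - j))
    (ha' : a' < min j' (n - 1 - j')) (h : a = j') : packingHead n j' a' ≠ j := by
  unfold packingHead; split_ifs <;> omega

abbrev PackingIndex (n : ℕ) := Σ j : Fin n, Fin (min (j : ℕ) (n - 1 - j))

theorem PackingIndex.ext {x y : PackingIndex n} (hj : (x.1 : ℕ) = y.1) (ha : (x.2 : ℕ) = y.2) :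
    x = y := by
  obtain ⟨j, a⟩ := x
  obtain ⟨j', a'⟩ := y
  obtain rfl : j = j' := Fin.ext hj
  obtain rfl : a = a' := Fin.ext ha
  rfl

def PackingIndex.tail (x : PackingIndex n) : Fin n := ⟨x.2, by omega⟩

def PackingIndex.head (x : PackingIndex n) : Fin n :=
  ⟨packingHead n x.1 x.2, packingHead_lt x.2.isLt⟩

def packingChain (x : PackingIndex n) : Finset (Fin n × Fin n) := {(x.tail, x.1), (x.1, x.head)}

theorem isChainMotif_packingChain (x : PackingIndex n) : IsChainMotif (packingChain x) :=
  ⟨x.tail, x.1, x.head, by simp only [Fin.lt_def, PackingIndex.tail]; omega,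
    lt_packingHead n x.1 x.2, rfl⟩

theorem eq_of_mem_packingChain {x y : PackingIndex n} {e : Fin n × Fin n}
    (hx : e ∈ packingChain x) (hy : e ∈ packingChain y) : x = y := by
  have hx₂ := x.2.isLt
  have hy₂ := y.2.isLt
  simp only [packingChain, PackingIndex.tail, PackingIndex.head, mem_insert, mem_singleton] at hx hy
  rcases hx with rfl | rfl <;> rcases hy with h | h <;> simp only [Prod.ext_iff, Fin.ext_iff] at h
  · exact PackingIndex.ext (by omega) (by omega)
  · exact (packingHead_ne_of_eq hx₂ hy₂ (by omega) (by omega)).elim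
  · exact (packingHead_ne_of_eq hy₂ hx₂ (by omega) (by omega)).elim
  · exact PackingIndex.ext h.1 <| packingHead_injective n x.1 <|
      h.2.trans (congrArg (packingHead n · y.2) h.1.symm)

theorem packingChain_injective : Function.Injective (packingChain (n := n)) := fun x _ h =>
  have hx : (x.tail, x.1) ∈ packingChain x := mem_insert_self _ _
  eq_of_mem_packingChain hx (h ▸ hx)

def packing (n : ℕ) : Finset (Finset (Fin n × Fin n)) := univ.image packingChain

theorem pairwiseDisjoint_packing :
    (packing n : Set (Finset (Fin n × Fin n))).PairwiseDisjoint id := by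
  simp only [packing, coe_image, coe_univ, Set.image_univ]
  rintro _ ⟨x, rfl⟩ _ ⟨y, rfl⟩ hne
  exact disjoint_left.2 fun _ hx hy => hne (congrArg packingChain (eq_of_mem_packingChain hx hy))

theorem isChainMotif_of_mem_packing {b : Finset (Fin n × Fin n)} (hb : b ∈ packing n) :
    IsChainMotif b := by
  obtain ⟨x, -, rfl⟩ := mem_image.1 hb
  exact isChainMotif_packingChain x

theorem card_packing : #(packing n) = ∑ j : Fin n, min (j : ℕ) (n - 1 - j) := by
  simp [packing, card_image_of_injective _ packingChain_injective]

end TT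

theorem tt_chain_packing_number_general (n : ℕ) :
    IsGreatest
      {m : ℕ | ∃ F : Finset (Finset (Fin n × Fin n)),
        (F : Set (Finset (Fin n × Fin n))).PairwiseDisjoint id ∧
        (∀ b ∈ F, IsChainMotif b) ∧ F.card = m}
      (if Even n then n * (n - 2) / 4 else (n - 1) ^ 2 / 4) := by
  rw [ite_even_eq_div_two_mul, ← sum_range_min_eq_div_two_mul,
    ← Fin.sum_univ_eq_sum_range (fun j => min j (n - 1 - j))]
  refine ⟨⟨TT.packing n, TT.pairwiseDisjoint_packing, fun _ => TT.isChainMotif_of_mem_packing,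
    TT.card_packing⟩, ?_⟩
  rintro _ ⟨F, hF, hchain, rfl⟩
  exact TT.card_le_sum_min_of_isChainMotif hF hchain

theorem tt_chain_packing_number (n : ℕ) (hn : 0 < n) :
    IsGreatest
      {m : ℕ | ∃ F : Finset (Finset (Fin n × Fin n)),
        (F : Set (Finset (Fin n × Fin n))).PairwiseDisjoint id ∧
        (∀ b ∈ F, IsChainMotif b) ∧ F.card = m}
      (if Even n then n * (n - 2) / 4 else (n - 1) ^ 2 / 4) :=
  tt_chain_packing_number_general n
end

section
/- For every admissible integer n, the transitive tournament TT_n admits a chain–collider–fork decomposition containing exactly ⌊n/4⌋ colliders, exactly n(n−1)/4 − ⌊n/4⌋ forks, and no chains. -/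
namespace TTD

open Finset

variable {n : ℕ}

lemma mem_ttArcs {x : Fin n × Fin n} : x ∈ ttArcs n ↔ x.1 < x.2 := by
  simp [ttArcs]

lemma fork_collider_false {b : Finset (Fin n × Fin n)}
    (hf : IsForkMotif b) (hc : IsColliderMotif b) : False := by
  obtain ⟨i, j, k, hij, hik, hjk, rfl⟩ := hf
  obtain ⟨i', k', j', h1, h2, h3, hb⟩ := hc
  have hA : (i', j') ∈ ({(i, j), (i, k)} : Finset (Fin n × Fin n)) := by rw [hb]; simp
  have hB : (k', j') ∈ ({(i, j), (i, k)} : Finset (Fin n × Fin n)) := by rw [hb]; simp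
  simp only [mem_insert, mem_singleton, Prod.mk.injEq] at hA hB
  apply h3
  rcases hA with ⟨h, _⟩ | ⟨h, _⟩ <;> rcases hB with ⟨h', _⟩ | ⟨h', _⟩ <;> rw [h, h']

lemma chain_fork_false {b : Finset (Fin n × Fin n)}
    (hc : IsChainMotif b) (hf : IsForkMotif b) : False := by
  obtain ⟨i, j, k, hij, hjk, rfl⟩ := hc
  obtain ⟨i', j', k', h1, h2, h3, hb⟩ := hf
  have hA : (i, j) ∈ ({(i', j'), (i', k')} : Finset (Fin n × Fin n)) := by rw [← hb]; simp
  have hB : (j, k) ∈ ({(i', j'), (i', k')} : Finset (Fin n × Fin n)) := by rw [← hb]; simp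
  simp only [mem_insert, mem_singleton, Prod.mk.injEq] at hA hB
  have : i = j := by
    rcases hA with ⟨h, _⟩ | ⟨h, _⟩ <;> rcases hB with ⟨h', _⟩ | ⟨h', _⟩ <;> rw [h, h']
  exact absurd this hij.ne

lemma chain_collider_false {b : Finset (Fin n × Fin n)}
    (hc : IsChainMotif b) (hf : IsColliderMotif b) : False := by
  obtain ⟨i, j, k, hij, hjk, rfl⟩ := hc
  obtain ⟨i', k', j', h1, h2, h3, hb⟩ := hf
  have hA : (i, j) ∈ ({(i', j'), (k', j')} : Finset (Fin n × Fin n)) := by rw [← hb]; simp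
  have hB : (j, k) ∈ ({(i', j'), (k', j')} : Finset (Fin n × Fin n)) := by rw [← hb]; simp
  simp only [mem_insert, mem_singleton, Prod.mk.injEq] at hA hB
  have : j = k := by
    rcases hA with ⟨_, h⟩ | ⟨_, h⟩ <;> rcases hB with ⟨_, h'⟩ | ⟨_, h'⟩ <;> rw [h, h']
  exact absurd this hjk.ne

lemma collider_subset {b : Finset (Fin n × Fin n)} (h : IsColliderMotif b) :
    b ⊆ ttArcs n := by
  obtain ⟨i, k, j, h1, h2, _, rfl⟩ := h
  intro x hx
  simp only [mem_insert, mem_singleton] at hx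
  rcases hx with rfl | rfl <;> simp [mem_ttArcs, h1, h2]

lemma fork_subset {b : Finset (Fin n × Fin n)} (h : IsForkMotif b) :
    b ⊆ ttArcs n := by
  obtain ⟨i, j, k, h1, h2, _, rfl⟩ := h
  intro x hx
  simp only [mem_insert, mem_singleton] at hx
  rcases hx with rfl | rfl <;> simp [mem_ttArcs, h1, h2]

/-! ### The step construction -/


def emb (m : ℕ) (p : Fin m × Fin m) : Fin (m + 4) × Fin (m + 4) :=
  (Fin.castAdd 4 p.1, Fin.castAdd 4 p.2)

lemma emb_injective (m : ℕ) : Function.Injective (emb m) := by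
  intro p q h
  simp only [emb, Prod.ext_iff, Fin.ext_iff, Fin.coe_castAdd] at h
  exact Prod.ext (Fin.ext h.1) (Fin.ext h.2)

def vA (m : ℕ) : Fin (m + 4) := ⟨m, by omega⟩
def vB (m : ℕ) : Fin (m + 4) := ⟨m + 1, by omega⟩
def vC (m : ℕ) : Fin (m + 4) := ⟨m + 2, by omega⟩
def vD (m : ℕ) : Fin (m + 4) := ⟨m + 3, by omega⟩

def blkColl (m : ℕ) : Finset (Fin (m + 4) × Fin (m + 4)) := {(vA m, vD m), (vC m, vD m)}
def blkFA (m : ℕ) : Finset (Fin (m + 4) × Fin (m + 4)) := {(vA m, vB m), (vA m, vC m)}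
def blkFB (m : ℕ) : Finset (Fin (m + 4) × Fin (m + 4)) := {(vB m, vC m), (vB m, vD m)}
def blkF1 (m : ℕ) (i : Fin m) : Finset (Fin (m + 4) × Fin (m + 4)) :=
  {(Fin.castAdd 4 i, vA m), (Fin.castAdd 4 i, vB m)}
def blkF2 (m : ℕ) (i : Fin m) : Finset (Fin (m + 4) × Fin (m + 4)) :=
  {(Fin.castAdd 4 i, vC m), (Fin.castAdd 4 i, vD m)}

variable {m : ℕ}

lemma E_vals {b : Finset (Fin m × Fin m)} {x : Fin (m + 4) × Fin (m + 4)}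
    (hx : x ∈ b.image (emb m)) : x.1.val < m ∧ x.2.val < m := by
  obtain ⟨p, _, rfl⟩ := mem_image.mp hx
  exact ⟨p.1.isLt, p.2.isLt⟩

lemma blkColl_vals {x : Fin (m + 4) × Fin (m + 4)} (hx : x ∈ blkColl m) :
    (x.1.val = m ∨ x.1.val = m + 2) ∧ x.2.val = m + 3 := by
  simp only [blkColl, mem_insert, mem_singleton] at hx
  rcases hx with rfl | rfl <;> simp [vA, vC, vD]

lemma blkFA_vals {x : Fin (m + 4) × Fin (m + 4)} (hx : x ∈ blkFA m) :
    x.1.val = m ∧ (x.2.val = m + 1 ∨ x.2.val = m + 2) := by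
  simp only [blkFA, mem_insert, mem_singleton] at hx
  rcases hx with rfl | rfl <;> simp [vA, vB, vC]

lemma blkFB_vals {x : Fin (m + 4) × Fin (m + 4)} (hx : x ∈ blkFB m) :
    x.1.val = m + 1 ∧ (x.2.val = m + 2 ∨ x.2.val = m + 3) := by
  simp only [blkFB, mem_insert, mem_singleton] at hx
  rcases hx with rfl | rfl <;> simp [vB, vC, vD]

lemma blkF1_vals {i : Fin m} {x : Fin (m + 4) × Fin (m + 4)} (hx : x ∈ blkF1 m i) :
    x.1 = Fin.castAdd 4 i ∧ x.1.val < m ∧ (x.2.val = m ∨ x.2.val = m + 1) := by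
  simp only [blkF1, mem_insert, mem_singleton] at hx
  rcases hx with rfl | rfl <;> simp [vA, vB, i.isLt]

lemma blkF2_vals {i : Fin m} {x : Fin (m + 4) × Fin (m + 4)} (hx : x ∈ blkF2 m i) :
    x.1 = Fin.castAdd 4 i ∧ x.1.val < m ∧ (x.2.val = m + 2 ∨ x.2.val = m + 3) := by
  simp only [blkF2, mem_insert, mem_singleton] at hx
  rcases hx with rfl | rfl <;> simp [vC, vD, i.isLt]

def Good (n : ℕ) (C F : Finset (Finset (Fin n × Fin n))) : Prop :=
  (∀ b ∈ C, IsColliderMotif b) ∧ (∀ b ∈ F, IsForkMotif b) ∧ IsTTDecomposition (C ∪ F)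

def EB (m : ℕ) : Finset (Fin m × Fin m) → Finset (Fin (m + 4) × Fin (m + 4)) :=
  Finset.image (emb m)

lemma EB_vals {b : Finset (Fin m × Fin m)} {x : Fin (m + 4) × Fin (m + 4)}
    (hx : x ∈ EB m b) : x.1.val < m ∧ x.2.val < m := by
  obtain ⟨p, _, rfl⟩ := mem_image.mp hx
  exact ⟨p.1.isLt, p.2.isLt⟩

lemma EB_injective (m : ℕ) : Function.Injective (EB m) :=
  Finset.image_injective (emb_injective m)

set_option maxRecDepth 8000 in
lemma step (m : ℕ) (C F : Finset (Finset (Fin m × Fin m))) (h : Good m C F) :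
    ∃ C' F' : Finset (Finset (Fin (m + 4) × Fin (m + 4))),
      Good (m + 4) C' F' ∧ C'.card = C.card + 1 ∧ F'.card = F.card + 2 * m + 2 := by
  classical
  obtain ⟨hcolC, hforkF, hPD, hsup⟩ := h
  set C' : Finset (Finset (Fin (m + 4) × Fin (m + 4))) :=
    C.image (EB m) ∪ {blkColl m} with hC'def
  set F' : Finset (Finset (Fin (m + 4) × Fin (m + 4))) :=
    F.image (EB m) ∪ ({blkFA m, blkFB m} ∪
      (Finset.univ.image (blkF1 m) ∪ Finset.univ.image (blkF2 m))) with hF'def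
  have hC'all : ∀ b ∈ C', IsColliderMotif b := by
    intro b hb
    rcases mem_union.mp hb with hb | hb
    · obtain ⟨b₀, hb₀, rfl⟩ := mem_image.mp hb
      obtain ⟨i, k, j, h1, h2, h3, rfl⟩ := hcolC b₀ hb₀
      refine ⟨Fin.castAdd 4 i, Fin.castAdd 4 k, Fin.castAdd 4 j, ?_, ?_, ?_, ?_⟩
      · simp only [Fin.lt_def, Fin.coe_castAdd]; exact h1
      · simp only [Fin.lt_def, Fin.coe_castAdd]; exact h2
      · exact fun hh => h3 (Fin.castAdd_injective m 4 hh)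
      · simp [EB, emb, Finset.image_insert, Finset.image_singleton]
    · rw [mem_singleton.mp hb]
      exact ⟨vA m, vC m, vD m, by simp only [Fin.lt_def, vA, vD]; omega,
        by simp only [Fin.lt_def, vC, vD]; omega,
        by simp only [ne_eq, Fin.ext_iff, vA, vC]; omega, rfl⟩
  have hF'all : ∀ b ∈ F', IsForkMotif b := by
    intro b hb
    rcases mem_union.mp hb with hb | hb
    · obtain ⟨b₀, hb₀, rfl⟩ := mem_image.mp hb
      obtain ⟨i, j, k, h1, h2, h3, rfl⟩ := hforkF b₀ hb₀
      refine ⟨Fin.castAdd 4 i, Fin.castAdd 4 j, Fin.castAdd 4 k, ?_, ?_, ?_, ?_⟩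
      · simp only [Fin.lt_def, Fin.coe_castAdd]; exact h1
      · simp only [Fin.lt_def, Fin.coe_castAdd]; exact h2
      · exact fun hh => h3 (Fin.castAdd_injective m 4 hh)
      · simp [EB, emb, Finset.image_insert, Finset.image_singleton]
    · rcases mem_union.mp hb with hb | hb
      · rcases mem_insert.mp hb with rfl | hb
        · exact ⟨vA m, vB m, vC m, by simp only [Fin.lt_def, vA, vB]; omega,
            by simp only [Fin.lt_def, vA, vC]; omega,
            by simp only [ne_eq, Fin.ext_iff, vB, vC]; omega, rfl⟩
        · rw [mem_singleton.mp hb]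
          exact ⟨vB m, vC m, vD m, by simp only [Fin.lt_def, vB, vC]; omega,
            by simp only [Fin.lt_def, vB, vD]; omega,
            by simp only [ne_eq, Fin.ext_iff, vC, vD]; omega, rfl⟩
      · rcases mem_union.mp hb with hb | hb
        · obtain ⟨i, _, rfl⟩ := mem_image.mp hb
          exact ⟨Fin.castAdd 4 i, vA m, vB m,
            by simp only [Fin.lt_def, vA, Fin.coe_castAdd]; exact i.isLt,
            by simp only [Fin.lt_def, vB, Fin.coe_castAdd]; omega,
            by simp only [ne_eq, Fin.ext_iff, vA, vB]; omega, rfl⟩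
        · obtain ⟨i, _, rfl⟩ := mem_image.mp hb
          exact ⟨Fin.castAdd 4 i, vC m, vD m,
            by simp only [Fin.lt_def, vC, Fin.coe_castAdd]; omega,
            by simp only [Fin.lt_def, vD, Fin.coe_castAdd]; omega,
            by simp only [ne_eq, Fin.ext_iff, vC, vD]; omega, rfl⟩
  have classify : ∀ b ∈ C' ∪ F',
      (∃ b₀ ∈ C ∪ F, b = EB m b₀) ∨ b = blkColl m ∨ b = blkFA m ∨ b = blkFB m ∨
        (∃ i, b = blkF1 m i) ∨ (∃ i, b = blkF2 m i) := by
    intro b hb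
    rcases mem_union.mp hb with hb | hb
    · rcases mem_union.mp hb with hb | hb
      · obtain ⟨b₀, hb₀, rfl⟩ := mem_image.mp hb
        exact Or.inl ⟨b₀, mem_union_left _ hb₀, rfl⟩
      · exact Or.inr (Or.inl (mem_singleton.mp hb))
    · rcases mem_union.mp hb with hb | hb
      · obtain ⟨b₀, hb₀, rfl⟩ := mem_image.mp hb
        exact Or.inl ⟨b₀, mem_union_right _ hb₀, rfl⟩
      · rcases mem_union.mp hb with hb | hb
        · rcases mem_insert.mp hb with rfl | hb
          · exact Or.inr (Or.inr (Or.inl rfl))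
          · exact Or.inr (Or.inr (Or.inr (Or.inl (mem_singleton.mp hb))))
        · rcases mem_union.mp hb with hb | hb
          · obtain ⟨i, _, rfl⟩ := mem_image.mp hb
            exact Or.inr (Or.inr (Or.inr (Or.inr (Or.inl ⟨i, rfl⟩))))
          · obtain ⟨i, _, rfl⟩ := mem_image.mp hb
            exact Or.inr (Or.inr (Or.inr (Or.inr (Or.inr ⟨i, rfl⟩))))
  have sep : ∀ {s t : Finset (Fin (m + 4) × Fin (m + 4))} (p : Fin (m + 4) × Fin (m + 4) → Prop),
      (∀ x ∈ s, p x) → (∀ x ∈ t, ¬ p x) → Disjoint s t := by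
    intro s t p hs ht
    rw [Finset.disjoint_left]
    intro x hx hx'
    exact ht x hx' (hs x hx)
  have hsnd2 : ∀ x ∈ blkColl m, m ≤ x.2.val := fun x hx => by have := blkColl_vals hx; omega
  have hsnd3 : ∀ x ∈ blkFA m, m ≤ x.2.val := fun x hx => by have := blkFA_vals hx; omega
  have hsnd4 : ∀ x ∈ blkFB m, m ≤ x.2.val := fun x hx => by have := blkFB_vals hx; omega
  have hsnd5 : ∀ (i : Fin m), ∀ x ∈ blkF1 m i, m ≤ x.2.val :=
    fun i x hx => by have := (blkF1_vals hx).2.2; omega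
  have hsnd6 : ∀ (i : Fin m), ∀ x ∈ blkF2 m i, m ≤ x.2.val :=
    fun i x hx => by have := (blkF2_vals hx).2.2; omega
  have hfst2 : ∀ x ∈ blkColl m, m ≤ x.1.val := fun x hx => by have := (blkColl_vals hx).1; omega
  have hfst3 : ∀ x ∈ blkFA m, m ≤ x.1.val := fun x hx => by have := (blkFA_vals hx).1; omega
  have hfst4 : ∀ x ∈ blkFB m, m ≤ x.1.val := fun x hx => by have := (blkFB_vals hx).1; omega
  have hfst5 : ∀ (i : Fin m), ∀ x ∈ blkF1 m i, x.1.val < m := fun i x hx => (blkF1_vals hx).2.1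
  have hfst6 : ∀ (i : Fin m), ∀ x ∈ blkF2 m i, x.1.val < m := fun i x hx => (blkF2_vals hx).2.1
  have dE : ∀ (b₀ : Finset (Fin m × Fin m)) {t : Finset (Fin (m + 4) × Fin (m + 4))},
      (∀ x ∈ t, m ≤ x.2.val) → Disjoint (EB m b₀) t := fun b₀ {t} ht =>
    sep (fun x => x.2.val < m) (fun x hx => (EB_vals hx).2)
      (fun x hx hlt => by have := ht x hx; omega)
  have hne_EB : ∀ (b₀ : Finset (Fin m × Fin m)) {t : Finset (Fin (m + 4) × Fin (m + 4))} (x),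
      x ∈ t → m ≤ x.2.val → EB m b₀ ≠ t := by
    intro b₀ t x hx hge heq
    rw [← heq] at hx
    have := (EB_vals hx).2
    omega
  have hpd : (↑(C' ∪ F') : Set (Finset (Fin (m + 4) × Fin (m + 4)))).PairwiseDisjoint id := by
    have dmix : ∀ {s t : Finset (Fin (m + 4) × Fin (m + 4))},
        (∀ x ∈ s, m ≤ x.1.val) → (∀ x ∈ t, x.1.val < m) → Disjoint s t := fun {s t} hs ht =>
      sep (fun x => m ≤ x.1.val) hs (fun x hx hle => by have := ht x hx; omega)
    have dEE : ∀ b₀ ∈ C ∪ F, ∀ b₁ ∈ C ∪ F, EB m b₀ ≠ EB m b₁ → Disjoint (EB m b₀) (EB m b₁) := by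
      intro b₀ h₀ b₁ h₁ hne
      have hne' : b₀ ≠ b₁ := fun hh => hne (by rw [hh])
      have hd := hPD (Finset.mem_coe.mpr h₀) (Finset.mem_coe.mpr h₁) hne'
      exact (Finset.disjoint_image (emb_injective m)).mpr hd
    have d23 : Disjoint (blkColl m) (blkFA m) :=
      sep (fun x => x.2.val = m + 3) (fun x hx => (blkColl_vals hx).2)
        (fun x hx hh => by have := (blkFA_vals hx).2; omega)
    have d24 : Disjoint (blkColl m) (blkFB m) :=
      sep (fun x => x.1.val = m ∨ x.1.val = m + 2) (fun x hx => (blkColl_vals hx).1)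
        (fun x hx hh => by have := (blkFB_vals hx).1; omega)
    have d34 : Disjoint (blkFA m) (blkFB m) :=
      sep (fun x => x.1.val = m) (fun x hx => (blkFA_vals hx).1)
        (fun x hx hh => by have := (blkFB_vals hx).1; omega)
    have d55 : ∀ i i' : Fin m, i ≠ i' → Disjoint (blkF1 m i) (blkF1 m i') := fun i i' hii =>
      sep (fun x => x.1 = Fin.castAdd 4 i) (fun x hx => (blkF1_vals hx).1)
        (fun x hx hh => hii (Fin.castAdd_injective m 4 (hh.symm.trans (blkF1_vals hx).1)))
    have d66 : ∀ i i' : Fin m, i ≠ i' → Disjoint (blkF2 m i) (blkF2 m i') := fun i i' hii =>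
      sep (fun x => x.1 = Fin.castAdd 4 i) (fun x hx => (blkF2_vals hx).1)
        (fun x hx hh => hii (Fin.castAdd_injective m 4 (hh.symm.trans (blkF2_vals hx).1)))
    have d56 : ∀ i i' : Fin m, Disjoint (blkF1 m i) (blkF2 m i') := fun i i' =>
      sep (fun x => x.2.val ≤ m + 1) (fun x hx => by have := (blkF1_vals hx).2.2; omega)
        (fun x hx hh => by have := (blkF2_vals hx).2.2; omega)
    intro b hb b' hb' hne
    show Disjoint b b'
    rcases classify b hb with ⟨b₀, hb₀, rfl⟩ | rfl | rfl | rfl | ⟨i, rfl⟩ | ⟨i, rfl⟩ <;>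
      rcases classify b' hb' with ⟨b₁, hb₁, rfl⟩ | rfl | rfl | rfl | ⟨i', rfl⟩ | ⟨i', rfl⟩
    · exact dEE b₀ hb₀ b₁ hb₁ hne
    · exact dE b₀ hsnd2
    · exact dE b₀ hsnd3
    · exact dE b₀ hsnd4
    · exact dE b₀ (hsnd5 i')
    · exact dE b₀ (hsnd6 i')
    · exact (dE b₁ hsnd2).symm
    · exact absurd rfl hne
    · exact d23
    · exact d24
    · exact dmix hfst2 (hfst5 i')
    · exact dmix hfst2 (hfst6 i')
    · exact (dE b₁ hsnd3).symm
    · exact d23.symm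
    · exact absurd rfl hne
    · exact d34
    · exact dmix hfst3 (hfst5 i')
    · exact dmix hfst3 (hfst6 i')
    · exact (dE b₁ hsnd4).symm
    · exact d24.symm
    · exact d34.symm
    · exact absurd rfl hne
    · exact dmix hfst4 (hfst5 i')
    · exact dmix hfst4 (hfst6 i')
    · exact (dE b₁ (hsnd5 i)).symm
    · exact (dmix hfst2 (hfst5 i)).symm
    · exact (dmix hfst3 (hfst5 i)).symm
    · exact (dmix hfst4 (hfst5 i)).symm
    · rcases eq_or_ne i i' with rfl | hii
      · exact absurd rfl hne
      · exact d55 i i' hii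
    · exact d56 i i'
    · exact (dE b₁ (hsnd6 i)).symm
    · exact (dmix hfst2 (hfst6 i)).symm
    · exact (dmix hfst3 (hfst6 i)).symm
    · exact (dmix hfst4 (hfst6 i)).symm
    · exact (d56 i' i).symm
    · rcases eq_or_ne i i' with rfl | hii
      · exact absurd rfl hne
      · exact d66 i i' hii
  have hsup' : (C' ∪ F').sup id = ttArcs (m + 4) := by
    apply le_antisymm
    · apply Finset.sup_le
      intro b hb
      rcases mem_union.mp hb with hb | hb
      · exact collider_subset (hC'all b hb)
      · exact fork_subset (hF'all b hb)
    · intro x hx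
      have hx' : x.1.val < x.2.val := mem_ttArcs.mp hx
      rw [Finset.mem_sup]
      by_cases h2 : x.2.val < m
      · have h1 : x.1.val < m := by omega
        have hp : (⟨x.1.val, h1⟩, (⟨x.2.val, h2⟩ : Fin m)) ∈ ttArcs m :=
          mem_ttArcs.mpr hx'
        rw [← hsup, Finset.mem_sup] at hp
        obtain ⟨b₀, hb₀, hpb⟩ := hp
        refine ⟨EB m b₀, ?_, ?_⟩
        · rcases mem_union.mp hb₀ with hb₀ | hb₀
          · exact mem_union_left _ (mem_union_left _ (mem_image_of_mem _ hb₀))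
          · exact mem_union_right _ (mem_union_left _ (mem_image_of_mem _ hb₀))
        · have hxe : x = emb m (⟨x.1.val, h1⟩, (⟨x.2.val, h2⟩ : Fin m)) := by
            simp [emb, Prod.ext_iff, Fin.ext_iff]
          rw [hxe]
          exact mem_image_of_mem _ hpb
      · by_cases h1 : x.1.val < m
        · -- middle arcs
          have hx2 : x.2.val = m ∨ x.2.val = m + 1 ∨ x.2.val = m + 2 ∨ x.2.val = m + 3 := by
            have := x.2.isLt; omega
          have hmemF1 : blkF1 m ⟨x.1.val, h1⟩ ∈ C' ∪ F' :=
            mem_union_right _ (mem_union_right _ (mem_union_right _ (mem_union_left _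
              (mem_image_of_mem _ (mem_univ _)))))
          have hmemF2 : blkF2 m ⟨x.1.val, h1⟩ ∈ C' ∪ F' :=
            mem_union_right _ (mem_union_right _ (mem_union_right _ (mem_union_right _
              (mem_image_of_mem _ (mem_univ _)))))
          rcases hx2 with h | h | h | h
          · exact ⟨blkF1 m ⟨x.1.val, h1⟩, hmemF1, by
              simp only [blkF1, id_eq, mem_insert, mem_singleton]
              exact Or.inl (Prod.ext (Fin.ext rfl) (Fin.ext h))⟩
          · exact ⟨blkF1 m ⟨x.1.val, h1⟩, hmemF1, by
              simp only [blkF1, id_eq, mem_insert, mem_singleton]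
              exact Or.inr (Prod.ext (Fin.ext rfl) (Fin.ext h))⟩
          · exact ⟨blkF2 m ⟨x.1.val, h1⟩, hmemF2, by
              simp only [blkF2, id_eq, mem_insert, mem_singleton]
              exact Or.inl (Prod.ext (Fin.ext rfl) (Fin.ext h))⟩
          · exact ⟨blkF2 m ⟨x.1.val, h1⟩, hmemF2, by
              simp only [blkF2, id_eq, mem_insert, mem_singleton]
              exact Or.inr (Prod.ext (Fin.ext rfl) (Fin.ext h))⟩
        · -- new arcs
          have hmemColl : blkColl m ∈ C' ∪ F' :=
            mem_union_left _ (mem_union_right _ (mem_singleton_self _))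
          have hmemFA : blkFA m ∈ C' ∪ F' :=
            mem_union_right _ (mem_union_right _ (mem_union_left _
              (mem_insert_self _ _)))
          have hmemFB : blkFB m ∈ C' ∪ F' :=
            mem_union_right _ (mem_union_right _ (mem_union_left _
              (mem_insert_of_mem (mem_singleton_self _))))
          have hv1 := x.1.isLt
          have hv2 := x.2.isLt
          have hc : (x.1.val = m ∧ x.2.val = m + 1) ∨ (x.1.val = m ∧ x.2.val = m + 2) ∨
              (x.1.val = m ∧ x.2.val = m + 3) ∨ (x.1.val = m + 1 ∧ x.2.val = m + 2) ∨
              (x.1.val = m + 1 ∧ x.2.val = m + 3) ∨ (x.1.val = m + 2 ∧ x.2.val = m + 3) := by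
            omega
          rcases hc with ⟨ha, hb⟩ | ⟨ha, hb⟩ | ⟨ha, hb⟩ | ⟨ha, hb⟩ | ⟨ha, hb⟩ | ⟨ha, hb⟩
          · exact ⟨blkFA m, hmemFA, by
              simp only [blkFA, id_eq, mem_insert, mem_singleton]
              exact Or.inl (Prod.ext (Fin.ext ha) (Fin.ext hb))⟩
          · exact ⟨blkFA m, hmemFA, by
              simp only [blkFA, id_eq, mem_insert, mem_singleton]
              exact Or.inr (Prod.ext (Fin.ext ha) (Fin.ext hb))⟩
          · exact ⟨blkColl m, hmemColl, by
              simp only [blkColl, id_eq, mem_insert, mem_singleton]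
              exact Or.inl (Prod.ext (Fin.ext ha) (Fin.ext hb))⟩
          · exact ⟨blkFB m, hmemFB, by
              simp only [blkFB, id_eq, mem_insert, mem_singleton]
              exact Or.inl (Prod.ext (Fin.ext ha) (Fin.ext hb))⟩
          · exact ⟨blkFB m, hmemFB, by
              simp only [blkFB, id_eq, mem_insert, mem_singleton]
              exact Or.inr (Prod.ext (Fin.ext ha) (Fin.ext hb))⟩
          · exact ⟨blkColl m, hmemColl, by
              simp only [blkColl, id_eq, mem_insert, mem_singleton]
              exact Or.inr (Prod.ext (Fin.ext ha) (Fin.ext hb))⟩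
  have cardC : C'.card = C.card + 1 := by
    rw [hC'def, card_union_of_disjoint, card_image_of_injective _ (EB_injective m),
      card_singleton]
    rw [Finset.disjoint_singleton_right]
    intro hmem
    obtain ⟨b₀, _, heq⟩ := mem_image.mp hmem
    exact hne_EB b₀ (x := (vA m, vD m)) (by simp [blkColl]) (by simp [vD]) heq
  have cardF : F'.card = F.card + 2 * m + 2 := by
    have hinj1 : Function.Injective (blkF1 m) := by
      intro i i' hh
      have hm : (Fin.castAdd 4 i, vA m) ∈ blkF1 m i' := by rw [← hh]; simp [blkF1]
      exact Fin.castAdd_injective m 4 (blkF1_vals hm).1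
    have hinj2 : Function.Injective (blkF2 m) := by
      intro i i' hh
      have hm : (Fin.castAdd 4 i, vC m) ∈ blkF2 m i' := by rw [← hh]; simp [blkF2]
      exact Fin.castAdd_injective m 4 (blkF2_vals hm).1
    have d34' : Disjoint (Finset.univ.image (blkF1 m)) (Finset.univ.image (blkF2 m)) := by
      rw [Finset.disjoint_left]
      intro b hb hb'
      obtain ⟨i, _, rfl⟩ := mem_image.mp hb
      obtain ⟨i', _, heq⟩ := mem_image.mp hb'
      have hm : (Fin.castAdd 4 i, vA m) ∈ blkF2 m i' := by rw [heq]; simp [blkF1]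
      have := (blkF2_vals hm).2.2
      simp only [vA] at this
      omega
    have d2_34 : Disjoint ({blkFA m, blkFB m} : Finset _)
        (Finset.univ.image (blkF1 m) ∪ Finset.univ.image (blkF2 m)) := by
      rw [Finset.disjoint_left]
      intro b hb hb'
      have hfst : ∀ y ∈ b, m ≤ y.1.val := by
        rcases mem_insert.mp hb with rfl | hb
        · exact hfst3
        · rw [mem_singleton.mp hb]; exact hfst4
      rcases mem_union.mp hb' with hb' | hb'
      · obtain ⟨i, _, heq⟩ := mem_image.mp hb'
        have hm : (Fin.castAdd 4 i, vA m) ∈ b := by rw [← heq]; simp [blkF1]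
        have := hfst _ hm
        simp only [Fin.coe_castAdd] at this
        have := i.isLt
        omega
      · obtain ⟨i, _, heq⟩ := mem_image.mp hb'
        have hm : (Fin.castAdd 4 i, vC m) ∈ b := by rw [← heq]; simp [blkF2]
        have := hfst _ hm
        simp only [Fin.coe_castAdd] at this
        have := i.isLt
        omega
    have d1_rest : Disjoint (F.image (EB m)) ({blkFA m, blkFB m} ∪
        (Finset.univ.image (blkF1 m) ∪ Finset.univ.image (blkF2 m))) := by
      rw [Finset.disjoint_left]
      intro b hb hb'
      obtain ⟨b₀, _, rfl⟩ := mem_image.mp hb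
      rcases mem_union.mp hb' with hb' | hb'
      · rcases mem_insert.mp hb' with heq | hb'
        · exact hne_EB b₀ (x := (vA m, vB m)) (by simp [blkFA]) (by simp [vB]) heq
        · exact hne_EB b₀ (x := (vB m, vC m)) (by simp [blkFB]) (by simp [vC])
            (mem_singleton.mp hb')
      · rcases mem_union.mp hb' with hb' | hb'
        · obtain ⟨i, _, heq⟩ := mem_image.mp hb'
          exact hne_EB b₀ (x := (Fin.castAdd 4 i, vA m)) (by simp [blkF1]) (by simp [vA])
            heq.symm
        · obtain ⟨i, _, heq⟩ := mem_image.mp hb'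
          exact hne_EB b₀ (x := (Fin.castAdd 4 i, vC m)) (by simp [blkF2]) (by simp [vC])
            heq.symm
    have hAB : blkFA m ≠ blkFB m := by
      intro heq
      have hm : (vA m, vB m) ∈ blkFB m := by rw [← heq]; simp [blkFA]
      have := (blkFB_vals hm).1
      simp only [vA] at this
      omega
    rw [hF'def, card_union_of_disjoint d1_rest, card_union_of_disjoint d2_34,
      card_union_of_disjoint d34',
      card_image_of_injective _ (EB_injective m),
      card_image_of_injective _ hinj1, card_image_of_injective _ hinj2,
      card_insert_of_notMem (by simpa using hAB), card_singleton, card_univ,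
      Fintype.card_fin]
    omega
  exact ⟨C', F', ⟨hC'all, hF'all, hpd, hsup'⟩, cardC, cardF⟩

lemma arith (m : ℕ) (hm : m % 4 ≤ 1) :
    m * (m - 1) / 4 - m / 4 + 2 * m + 2 = (m + 4) * (m + 4 - 1) / 4 - (m + 4) / 4 := by
  have h4 : (0 : ℕ) < 4 := by norm_num
  obtain ⟨a, ha⟩ : ∃ a, m = 4 * a ∨ m = 4 * a + 1 := ⟨m / 4, by omega⟩
  rcases ha with rfl | rfl
  · have e1 : 4 * (a * a) - a = a * (4 * a - 1) := by
      apply Nat.sub_eq_of_eq_add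
      rcases Nat.eq_zero_or_pos a with rfl | hpos
      · simp
      · have h1 : 4 * a - 1 + 1 = 4 * a := by omega
        rw [← Nat.mul_succ, Nat.succ_eq_add_one, h1]; ring
    have eL : 4 * a * (4 * a - 1) = 4 * (a * (4 * a - 1)) := by ring
    have eS : 4 * a + 4 - 1 = 4 * a + 3 := by omega
    have eR : (4 * a + 4) * (4 * a + 3) = 4 * ((a + 1) * (4 * a + 3)) := by ring
    rw [eL, eS, eR, Nat.mul_div_cancel_left _ h4, Nat.mul_div_cancel_left _ h4, ← e1]
    have h2 : (a + 1) * (4 * a + 3) = 4 * (a * a) + 7 * a + 3 := by ring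
    rw [h2]
    have hq : a ≤ a * a := by
      rcases Nat.eq_zero_or_pos a with rfl | hpos
      · simp
      · calc a = a * 1 := (Nat.mul_one a).symm
          _ ≤ a * a := Nat.mul_le_mul_left a hpos
    generalize a * a = q at hq ⊢
    omega
  · have eS1 : 4 * a + 1 - 1 = 4 * a := by omega
    have eL : (4 * a + 1) * (4 * a) = 4 * (a * (4 * a + 1)) := by ring
    have eS2 : 4 * a + 1 + 4 - 1 = 4 * a + 4 := by omega
    have eR : (4 * a + 1 + 4) * (4 * a + 4) = 4 * ((4 * a + 5) * (a + 1)) := by ring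
    rw [eS1, eL, eS2, eR, Nat.mul_div_cancel_left _ h4, Nat.mul_div_cancel_left _ h4]
    have h2 : a * (4 * a + 1) = 4 * (a * a) + a := by ring
    have h3 : (4 * a + 5) * (a + 1) = 4 * (a * a) + 9 * a + 5 := by ring
    rw [h2, h3]
    generalize a * a = q
    omega

lemma key : ∀ n : ℕ, n % 4 ≤ 1 →
    ∃ C F : Finset (Finset (Fin n × Fin n)), Good n C F ∧ C.card = n / 4 ∧
      F.card = n * (n - 1) / 4 - n / 4 := by
  intro n
  induction n using Nat.strong_induction_on with
  | _ n ih =>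
    intro hn
    rcases lt_or_ge n 4 with h4 | h4
    · interval_cases n
      · refine ⟨∅, ∅, ⟨fun b hb => absurd hb (notMem_empty b),
          fun b hb => absurd hb (notMem_empty b), by simp, ?_⟩, by simp, by simp⟩
        simp only [union_empty, sup_empty]
        decide
      · refine ⟨∅, ∅, ⟨fun b hb => absurd hb (notMem_empty b),
          fun b hb => absurd hb (notMem_empty b), by simp, ?_⟩, by simp, by simp⟩
        simp only [union_empty, sup_empty]
        decide
      · exact absurd hn (by decide)
      · exact absurd hn (by decide)
    · obtain ⟨m, rfl⟩ : ∃ m, n = m + 4 := ⟨n - 4, by omega⟩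
      obtain ⟨C, F, hG, hC, hF⟩ := ih m (by omega) (by omega)
      obtain ⟨C', F', hG', hC', hF'⟩ := step m C F hG
      refine ⟨C', F', hG', ?_, ?_⟩
      · rw [hC', hC]; omega
      · rw [hF', hF]; exact arith m (by omega)

end TTD

theorem tt_fork_collider_decomposition (n : ℕ) (hadm : Admissible n) :
    ∃ P : Finset (Finset (Fin n × Fin n)),
      IsTTDecomposition P ∧ (∀ b ∈ P, IsChainMotif b ∨ IsColliderMotif b ∨ IsForkMotif b) ∧
      (P.filter IsColliderMotif).card = n / 4 ∧
      (P.filter IsForkMotif).card = n * (n - 1) / 4 - n / 4 ∧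
      (P.filter IsChainMotif).card = 0 := by
  classical
  have hn : n % 4 ≤ 1 := by rcases hadm with h | h <;> omega
  obtain ⟨C, F, ⟨hC, hF, hdec⟩, hCc, hFc⟩ := TTD.key n hn
  refine ⟨C ∪ F, hdec, ?_, ?_, ?_, ?_⟩
  · intro b hb
    rcases Finset.mem_union.mp hb with hb | hb
    · exact Or.inr (Or.inl (hC b hb))
    · exact Or.inr (Or.inr (hF b hb))
  · have hfc : (C ∪ F).filter IsColliderMotif = C := by
      ext b
      simp only [Finset.mem_filter, Finset.mem_union]
      constructor
      · rintro ⟨hb | hb, hcol⟩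
        · exact hb
        · exact absurd hcol (fun hc => TTD.fork_collider_false (hF b hb) hc)
      · intro hb
        exact ⟨Or.inl hb, hC b hb⟩
    rw [hfc, hCc]
  · have hff : (C ∪ F).filter IsForkMotif = F := by
      ext b
      simp only [Finset.mem_filter, Finset.mem_union]
      constructor
      · rintro ⟨hb | hb, hfork⟩
        · exact absurd hfork (fun hf => TTD.fork_collider_false hf (hC b hb))
        · exact hb
      · intro hb
        exact ⟨Or.inr hb, hF b hb⟩
    rw [hff, hFc]
  · have hch : (C ∪ F).filter IsChainMotif = ∅ := by
      rw [Finset.filter_eq_empty_iff]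
      intro b hb
      rcases Finset.mem_union.mp hb with hb | hb
      · exact fun hchain => TTD.chain_collider_false hchain (hC b hb)
      · exact fun hchain => TTD.chain_fork_false hchain (hF b hb)
    rw [hch, Finset.card_empty]
end
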